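/- arXiv:2108.05508 — 8 statements merged into one kernel-verified Lean document; each statement's English description precedes it below -/
import Mathlib

section
/- Assume a(i,i) = 2 for all i ∈ I. Let ν ∈ I^n be block-constant: ν_k = ν^i whenever c_{i−1} < k ≤ c_i, where ν^1,…,ν^p ∈ I satisfy ν^j ≠ ν^{j+1} for all 1 ≤ j < p. Let d ∈ D(ν), i.e. d ∈ S_n is strictly increasing on each block {c_{i−1}+1,…,c_i} and dν = ν. Let w = w_1 ∘ w_2 ∘ ⋯ ∘ w_p where each w_j ∈ S_n permutes only the block {c_{j−1}+1,…,c_j}. Then for every 1 ≤ i ≤ p and every k with c_{i−1} < k ≤ c_i: N(d∘w, ν, k) = N(d, ν, w_i(k)) − 2·|J̃_{w_i}^{<k}| + 2·(w_i(k) − c_{i−1} − 1), where J̃_{w_i}^{<k} := {c_{i−1}+1 ≤ a' < k : w_i(a') < w_i(k)}. In particular, N(d∘w, ν, k) does not depend on w_j for j ≠ i. -/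
/-!
Split the sum defining `N(σ, ν, t)` at the start of the block of `t`: the indices `j < t`
lie either in earlier blocks or in the block of `t` itself. Since every `w_j` stays inside its
block, `w` permutes the union of the earlier blocks and preserves `ν`, so reindexing by `w` turns
the earlier-block part for `d ∘ w` at `k` into the one for `d` at `w k = w_i k`. On the block of
`k` the tuple `ν` is constant, so each term is `a(ν, ν) = 2` and only the number of terms matters;
as `d` is increasing there, `d (w j) < d (w k)` becomes `w_i j < w_i k`, while for `d` at `w_i k`
every index `c_{i-1} < j < w_i k` counts.
-/

/-- `N(w,ν,t) = L(ν_t) − Σ_{j ∈ J_w^{<t}} a(ν_t, ν_j)`, where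
`J_w^{<t} = {j < t : w(j) < w(t)}`. -/
def Nfun {I : Type*} (a : I → I → ℤ) (L : I → ℤ) {n : ℕ}
    (w : Equiv.Perm (Fin n)) (ν : Fin n → I) (t : Fin n) : ℤ :=
  L (ν t) - ∑ j ∈ Finset.univ.filter (fun j => j < t ∧ w j < w t), a (ν t) (ν j)

open Finset Function

theorem Equiv.Perm.apply_mem_of_forall_notMem_eq {α : Type*} (σ : Equiv.Perm α) {s : Set α}
    (h : ∀ x ∉ s, σ x = x) {x : α} (hx : x ∈ s) : σ x ∈ s := by
  by_contra hσx
  exact hσx ((σ.injective (h _ hσx)).symm ▸ hx)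

section BlockProduct

variable {α : Type*} (W : ℕ → Equiv.Perm α) {s : ℕ → Set α} {m : ℕ}

theorem list_prod_map_range_apply_of_forall_notMem (hW : ∀ j < m, ∀ x ∉ s j, W j x = x)
    {x : α} (hx : ∀ j < m, x ∉ s j) : ((List.range m).map W).prod x = x := by
  induction m with
  | zero => simp
  | succ m ih =>
    rw [List.range_succ, List.map_append, List.prod_append]
    simp only [List.map_cons, List.map_nil, List.prod_cons, List.prod_nil, mul_one,
      Equiv.Perm.mul_apply]
    rw [hW m m.lt_succ_self x (hx m m.lt_succ_self)]
    exact ih (fun j hj => hW j (by omega)) (fun j hj => hx j (by omega))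

theorem list_prod_map_range_apply_of_mem (hs : Pairwise (Disjoint on s))
    (hW : ∀ j < m, ∀ x ∉ s j, W j x = x) {i : ℕ} (hi : i < m) {x : α} (hx : x ∈ s i) :
    ((List.range m).map W).prod x = W i x := by
  induction m with
  | zero => omega
  | succ m ih =>
    rw [List.range_succ, List.map_append, List.prod_append]
    simp only [List.map_cons, List.map_nil, List.prod_cons, List.prod_nil, mul_one,
      Equiv.Perm.mul_apply]
    rcases (Nat.lt_succ_iff_lt_or_eq.mp hi) with hi | rfl
    · rw [hW m m.lt_succ_self x fun hxm => (hs (Nat.ne_of_lt hi)).ne_of_mem hx hxm rfl]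
      exact ih (fun j hj => hW j (by omega)) hi
    · have hWx : W i x ∈ s i := (W i).apply_mem_of_forall_notMem_eq (hW i hi) hx
      exact list_prod_map_range_apply_of_forall_notMem W (fun j hj => hW j (by omega))
        fun j hj hxj => (hs (Nat.ne_of_lt hj)).ne_of_mem hxj hWx rfl

end BlockProduct

section Blocks

variable {c : ℕ → ℕ} {n p : ℕ}

theorem exists_lt_and_mem_Ico_succ (hc0 : c 0 = 0) {x : ℕ} (hx : x < c p) :
    ∃ j < p, x ∈ Set.Ico (c j) (c (j + 1)) := by
  induction p with
  | zero => omega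
  | succ p ih =>
    by_cases hxp : x < c p
    · obtain ⟨j, hj, hxj⟩ := ih hxp
      exact ⟨j, by omega, hxj⟩
    · exact ⟨p, p.lt_succ_self, not_lt.1 hxp, hx⟩

theorem lt_iff_of_mem_Ico_succ (hc : Monotone c) {i j y : ℕ}
    (hy : y ∈ Set.Ico (c j) (c (j + 1))) : y < c i ↔ j < i := by
  obtain ⟨hy1, hy2⟩ := hy
  constructor
  · intro hyi
    by_contra hji
    have := hc (not_lt.1 hji)
    omega
  · intro hji
    have : c (j + 1) ≤ c i := hc hji
    omega

theorem list_prod_map_range_apply_of_mem_Ico (hc : Monotone c) (W : ℕ → Equiv.Perm (Fin n))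
    (hW : ∀ j < p, ∀ x : Fin n, ((x : ℕ) < c j ∨ c (j + 1) ≤ (x : ℕ)) → W j x = x)
    {j : ℕ} (hj : j < p) {x : Fin n} (hx : (x : ℕ) ∈ Set.Ico (c j) (c (j + 1))) :
    ((List.range p).map W).prod x = W j x ∧
      ((W j x : Fin n) : ℕ) ∈ Set.Ico (c j) (c (j + 1)) := by
  set B : ℕ → Set (Fin n) := fun j => Fin.val ⁻¹' Set.Ico (c j) (c (j + 1))
  have hB : Pairwise (Disjoint on B) :=
    (by simpa using hc.pairwise_disjoint_on_Ico_succ :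
      Pairwise (Disjoint on fun j => Set.Ico (c j) (c (j + 1)))).mono fun _ _ h => h.preimage _
  have hWB : ∀ j < p, ∀ x ∉ B j, W j x = x := fun j hj x hx =>
    hW j hj x (by simp only [B, Set.mem_preimage, Set.mem_Ico] at hx; omega)
  exact ⟨list_prod_map_range_apply_of_mem W hB hWB hj hx,
    (W j).apply_mem_of_forall_notMem_eq (hWB j hj) hx⟩

theorem exists_mem_Ico_and_list_prod_apply_mem_Ico (hc : Monotone c)
    (W : ℕ → Equiv.Perm (Fin n))
    (hW : ∀ j < p, ∀ x : Fin n, ((x : ℕ) < c j ∨ c (j + 1) ≤ (x : ℕ)) → W j x = x)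
    (hc0 : c 0 = 0) (hcp : c p = n) (x : Fin n) :
    ∃ j < p, (x : ℕ) ∈ Set.Ico (c j) (c (j + 1)) ∧
      ((((List.range p).map W).prod x : Fin n) : ℕ) ∈ Set.Ico (c j) (c (j + 1)) := by
  obtain ⟨j, hj, hx⟩ := exists_lt_and_mem_Ico_succ hc0 (x.isLt.trans_eq hcp.symm)
  obtain ⟨hwx, hWx⟩ := list_prod_map_range_apply_of_mem_Ico hc W hW hj hx
  exact ⟨j, hj, hx, hwx ▸ hWx⟩

theorem list_prod_map_range_apply_lt_iff (hc : Monotone c) (W : ℕ → Equiv.Perm (Fin n))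
    (hW : ∀ j < p, ∀ x : Fin n, ((x : ℕ) < c j ∨ c (j + 1) ≤ (x : ℕ)) → W j x = x)
    (hc0 : c 0 = 0) (hcp : c p = n) (x : Fin n) (i : ℕ) :
    ((((List.range p).map W).prod x : Fin n) : ℕ) < c i ↔ (x : ℕ) < c i := by
  obtain ⟨j, -, hx, hwx⟩ := exists_mem_Ico_and_list_prod_apply_mem_Ico hc W hW hc0 hcp x
  rw [lt_iff_of_mem_Ico_succ hc hx, lt_iff_of_mem_Ico_succ hc hwx]

theorem apply_list_prod_map_range_apply_eq {I : Type*} (hc : Monotone c)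
    (W : ℕ → Equiv.Perm (Fin n))
    (hW : ∀ j < p, ∀ x : Fin n, ((x : ℕ) < c j ∨ c (j + 1) ≤ (x : ℕ)) → W j x = x)
    (hc0 : c 0 = 0) (hcp : c p = n) {ν : Fin n → I} {nb : ℕ → I}
    (hν : ∀ i < p, ∀ k : Fin n, c i ≤ (k : ℕ) → (k : ℕ) < c (i + 1) → ν k = nb i)
    (x : Fin n) :
    ν (((List.range p).map W).prod x) = ν x := by
  obtain ⟨j, hj, hx, hwx⟩ := exists_mem_Ico_and_list_prod_apply_mem_Ico hc W hW hc0 hcp x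
  rw [hν j hj _ hwx.1 hwx.2, hν j hj x hx.1 hx.2]

end Blocks

theorem Fin.card_filter_le_val_and_lt {n m : ℕ} (t : Fin n) (hmt : m ≤ (t : ℕ)) :
    #(univ.filter fun j : Fin n => m ≤ (j : ℕ) ∧ j < t) = t - m := by
  have : univ.filter (fun j : Fin n => m ≤ (j : ℕ) ∧ j < t) = Ico ⟨m, by omega⟩ t := by
    ext j
    simp [Fin.le_def]
  rw [this, Fin.card_Ico]

theorem sum_filter_lt_mul_perm {M : Type*} [AddCommMonoid M] {n m : ℕ} (f : Fin n → M)
    (d w : Equiv.Perm (Fin n)) (hw : ∀ x, ((w x : Fin n) : ℕ) < m ↔ (x : ℕ) < m)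
    (hf : ∀ x, f (w x) = f x) (t : Fin n) :
    ∑ j ∈ univ.filter (fun j : Fin n => (j : ℕ) < m ∧ (d * w) j < (d * w) t), f j
      = ∑ j ∈ univ.filter (fun j : Fin n => (j : ℕ) < m ∧ d j < d (w t)), f j := by
  refine sum_equiv w (fun x => ?_) (fun x _ => ?_)
  · rw [mem_filter, mem_filter, Equiv.Perm.mul_apply, Equiv.Perm.mul_apply, hw]
    simp only [mem_univ, true_and]
  · exact (hf x).symm

theorem filter_apply_lt_eq_of_strictMonoOn {n l r : ℕ} {d σ τ : Equiv.Perm (Fin n)}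
    (hd : StrictMonoOn d (Fin.val ⁻¹' Set.Ico l r))
    (hστ : ∀ j : Fin n, (j : ℕ) ∈ Set.Ico l r →
      σ j = d (τ j) ∧ ((τ j : Fin n) : ℕ) ∈ Set.Ico l r)
    {t : Fin n} (ht : (t : ℕ) ∈ Set.Ico l r) :
    univ.filter (fun j : Fin n => l ≤ (j : ℕ) ∧ j < t ∧ σ j < σ t)
      = univ.filter (fun j : Fin n => l ≤ (j : ℕ) ∧ j < t ∧ τ j < τ t) :=
  filter_congr fun j _ => and_congr_right fun hj1 => and_congr_right fun hjt => by
    obtain ⟨hσj, hτj⟩ := hστ j ⟨hj1, (Fin.lt_def.1 hjt).trans ht.2⟩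
    obtain ⟨hσt, hτt⟩ := hστ t ht
    rw [hσj, hσt, hd.lt_iff_lt hτj hτt]

theorem Nfun_eq_sub_sum_sub_two_mul_card {I : Type*} (a : I → I → ℤ) (L : I → ℤ) {n : ℕ}
    (σ : Equiv.Perm (Fin n)) (ν : Fin n → I) (t : Fin n) {m : ℕ} {v : I}
    (hmt : m ≤ (t : ℕ)) (hνt : ν t = v) (hν : ∀ j : Fin n, m ≤ (j : ℕ) → j < t → ν j = v)
    (ha : a v v = 2) :
    Nfun a L σ ν t
      = L v - ∑ j ∈ univ.filter (fun j : Fin n => (j : ℕ) < m ∧ σ j < σ t), a v (ν j)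
      - 2 * #(univ.filter fun j : Fin n => m ≤ (j : ℕ) ∧ j < t ∧ σ j < σ t) := by
  rw [Nfun, hνt, ← sum_filter_add_sum_filter_not _ (fun j : Fin n => (j : ℕ) < m),
    filter_filter, filter_filter]
  have hlow : univ.filter (fun j : Fin n => (j < t ∧ σ j < σ t) ∧ (j : ℕ) < m)
      = univ.filter (fun j : Fin n => (j : ℕ) < m ∧ σ j < σ t) :=
    filter_congr fun j _ => ⟨fun h => ⟨h.2, h.1.2⟩,
      fun h => ⟨⟨Fin.lt_def.2 (by omega), h.2⟩, h.1⟩⟩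
  have hhigh : univ.filter (fun j : Fin n => (j < t ∧ σ j < σ t) ∧ ¬ (j : ℕ) < m)
      = univ.filter (fun j : Fin n => m ≤ (j : ℕ) ∧ j < t ∧ σ j < σ t) :=
    filter_congr fun j _ => by omega
  have hconst : ∀ j ∈ univ.filter (fun j : Fin n => m ≤ (j : ℕ) ∧ j < t ∧ σ j < σ t),
      a v (ν j) = 2 := fun j hj => by
    rw [hν j (mem_filter.1 hj).2.1 (mem_filter.1 hj).2.2.1, ha]
  rw [hlow, hhigh, sum_congr rfl hconst, sum_const, nsmul_eq_mul]
  ring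

/-- Blocks are `[c i, c (i + 1))` with `i` counted from `0`: `c i` is the paper's `c_{i-1}`, and
`W j`, `nb j` are the paper's `w_{j+1}`, `ν^{j+1}`. -/
theorem stmt3_general {I : Type*} (a : I → I → ℤ) (L : I → ℤ)
    (ha : ∀ i, a i i = 2)
    (n p : ℕ) (b : ℕ → ℕ)
    (c : ℕ → ℕ) (hc : ∀ i, c i = ∑ j ∈ Finset.range i, b j) (hcp : c p = n)
    (nb : ℕ → I)
    (ν : Fin n → I)
    (hν : ∀ i < p, ∀ k : Fin n, c i ≤ (k : ℕ) → (k : ℕ) < c (i + 1) → ν k = nb i)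
    (d : Equiv.Perm (Fin n))
    (hdinc : ∀ i < p, ∀ k l : Fin n,
      c i ≤ (k : ℕ) → k < l → (l : ℕ) < c (i + 1) → d k < d l)
    (W : ℕ → Equiv.Perm (Fin n))
    (hW : ∀ j < p, ∀ k : Fin n, ((k : ℕ) < c j ∨ c (j + 1) ≤ (k : ℕ)) → W j k = k)
    (w : Equiv.Perm (Fin n)) (hw : w = ((List.range p).map W).prod)
    (i : ℕ) (hi : i < p) (k : Fin n) (hk1 : c i ≤ (k : ℕ)) (hk2 : (k : ℕ) < c (i + 1)) :
    Nfun a L (d * w) ν k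
      = Nfun a L d ν (W i k)
        - 2 * ((Finset.univ.filter
            (fun a' : Fin n => c i ≤ (a' : ℕ) ∧ a' < k ∧ W i a' < W i k)).card : ℤ)
        + 2 * (((W i k : Fin n) : ℤ) - (c i : ℤ)) := by
  subst hw
  have hc_mono : Monotone c := monotone_nat_of_le_succ fun j => by
    rw [hc, hc, sum_range_succ]
    omega
  have hc0 : c 0 = 0 := (hc 0).trans (sum_range_zero b)
  have hkB : (k : ℕ) ∈ Set.Ico (c i) (c (i + 1)) := ⟨hk1, hk2⟩
  have hwW := fun (j : Fin n) (hj : (j : ℕ) ∈ Set.Ico (c i) (c (i + 1))) =>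
    list_prod_map_range_apply_of_mem_Ico hc_mono W hW hi hj
  obtain ⟨hwk, hWkB⟩ := hwW k hkB
  have hd : StrictMonoOn d (Fin.val ⁻¹' Set.Ico (c i) (c (i + 1))) :=
    fun x hx y hy hxy => hdinc i hi x y hx.1 hxy hy.2
  rw [Nfun_eq_sub_sum_sub_two_mul_card a L _ ν k hk1 (hν i hi k hk1 hk2)
      (fun j hj1 hjk => hν i hi j hj1 ((Fin.lt_def.1 hjk).trans hk2)) (ha _),
    Nfun_eq_sub_sum_sub_two_mul_card a L d ν (W i k) hWkB.1 (hν i hi _ hWkB.1 hWkB.2)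
      (fun j hj1 hjk => hν i hi j hj1 ((Fin.lt_def.1 hjk).trans hWkB.2)) (ha _),
    sum_filter_lt_mul_perm _ d _
      (fun x => list_prod_map_range_apply_lt_iff hc_mono W hW hc0 hcp x _)
      (fun x => by rw [apply_list_prod_map_range_apply_eq hc_mono W hW hc0 hcp hν]) k, hwk,
    filter_apply_lt_eq_of_strictMonoOn hd (τ := W i)
      (fun j hj => ⟨by rw [Equiv.Perm.mul_apply, (hwW j hj).1], (hwW j hj).2⟩) hkB,
    filter_apply_lt_eq_of_strictMonoOn hd (τ := 1) (fun j hj => ⟨rfl, hj⟩) hWkB]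
  simp only [Equiv.Perm.one_apply, and_self]
  rw [Fin.card_filter_le_val_and_lt _ hWkB.1, Nat.cast_sub hWkB.1]
  ring

/-- Lemma 3.7 of the paper: for block-constant `ν` (blocks `[c_i, c_{i+1})`, 0-based,
adjacent block values distinct), `d ∈ D(ν)` (strictly increasing on each block, `dν = ν`)
and `w = w_1 ∘ ⋯ ∘ w_p` with `w_j` supported on block `j`, one has, for `k` in block `i`,
`N(d∘w, ν, k) = N(d, ν, w_i(k)) − 2|J̃_{w_i}^{<k}| + 2(w_i(k) − c_i)`. -/
theorem stmt3 {I : Type*} (a : I → I → ℤ) (L : I → ℤ)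
    (ha : ∀ i, a i i = 2)
    (n p : ℕ) (b : ℕ → ℕ) (hbpos : ∀ i < p, 0 < b i)
    (c : ℕ → ℕ) (hc : ∀ i, c i = ∑ j ∈ Finset.range i, b j) (hcp : c p = n)
    (nb : ℕ → I) (hadj : ∀ i, i + 1 < p → nb i ≠ nb (i + 1))
    (ν : Fin n → I)
    (hν : ∀ i < p, ∀ k : Fin n, c i ≤ (k : ℕ) → (k : ℕ) < c (i + 1) → ν k = nb i)
    (d : Equiv.Perm (Fin n))
    (hdinc : ∀ i < p, ∀ k l : Fin n,
      c i ≤ (k : ℕ) → k < l → (l : ℕ) < c (i + 1) → d k < d l)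
    (hdν : ∀ k, ν (d⁻¹ k) = ν k)
    (W : ℕ → Equiv.Perm (Fin n))
    (hW : ∀ j < p, ∀ k : Fin n, ((k : ℕ) < c j ∨ c (j + 1) ≤ (k : ℕ)) → W j k = k)
    (w : Equiv.Perm (Fin n)) (hw : w = ((List.range p).map W).prod)
    (i : ℕ) (hi : i < p) (k : Fin n) (hk1 : c i ≤ (k : ℕ)) (hk2 : (k : ℕ) < c (i + 1)) :
    Nfun a L (d * w) ν k
      = Nfun a L d ν (W i k)
        - 2 * ((Finset.univ.filter
            (fun a' : Fin n => c i ≤ (a' : ℕ) ∧ a' < k ∧ W i a' < W i k)).card : ℤ)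
        + 2 * (((W i k : Fin n) : ℤ) - (c i : ℤ)) :=
  stmt3_general a L ha n p b c hc hcp nb ν hν d hdinc W hW w hw i hi k hk1 hk2
end

section
/- Let b ∈ ℕ and let m_1, …, m_b be elements of a commutative ring R (in particular, integers). Then Σ_{w ∈ S_b} ∏_{k=1}^{b} ( m_k + 2(k−1) − 2·|J_w^{<k}| ) = b! · ∏_{k=1}^{b} ( m_k + k − 1 ), where the factor b! denotes b-factorial acting by scalar multiplication. (This is the key summation identity established in the proof of Theorem 3.8.) -/
/-!
For `w ∈ S_{n+1}`, write `w = insertLast v e` with `v = w (last n)` and `e ∈ S_n` the relative order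
of the values `w 0, …, w (n-1)`. The count `#{j < k | w j < w k}` equals that of `e` for `k < n` and
equals `v` for `k = n`. Hence `w ↦ (#{j < k | w j < w k})_k` is a bijection from `S_b` onto
`∏_k {0, …, k}`, and the sum over `S_b` of a product of functions of these counts factors as
`∏_k ∑_{c ≤ k}`. For the factor `m_k + 2k - 2c` the inner sum is `(k + 1)(m_k + k)`, and
`∏_k (k + 1) = b!`.
-/

open Finset Equiv

theorem Fin.card_filter_univ_castSucc_of_not_last {n : ℕ} (p : Fin (n + 1) → Prop)
    [DecidablePred p] (h : ¬ p (Fin.last n)) : #{k | p k} = #{i : Fin n | p i.castSucc} := by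
  rw [Fin.univ_castSuccEmb, filter_cons_of_neg _ _ _ _ h, filter_map, card_map]
  rfl

theorem Fin.prod_univ_val_add_one {R : Type*} [CommSemiring R] (n : ℕ) :
    ∏ k : Fin n, ((k : R) + 1) = n.factorial := by
  rw [Fin.prod_univ_eq_prod_range (fun k => (k : R) + 1), ← prod_range_add_one_eq_factorial]
  push_cast
  rfl

theorem Finset.sum_range_add_two_mul_sub_two_mul {R : Type*} [CommRing R] (x : R) (n : ℕ) :
    ∑ c ∈ range (n + 1), (x + 2 * n - 2 * c) = (n + 1) * (x + n) := by
  have gauss : (∑ c ∈ range (n + 1), c) * 2 = (n + 1) * n := sum_range_id_mul_two (n + 1)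
  apply_fun (Nat.cast : ℕ → R) at gauss
  simp only [sum_sub_distrib, sum_add_distrib, sum_const, card_range, nsmul_eq_mul, ← mul_sum]
  push_cast at gauss ⊢
  linear_combination -gauss

namespace Equiv.Perm

def leftSmallerCount {n : ℕ} (w : Perm (Fin n)) (k : Fin n) : ℕ :=
  #{j | j < k ∧ w j < w k}

theorem card_filter_apply_lt {n : ℕ} (w : Perm (Fin n)) (a : Fin n) : #{j | w j < a} = a := by
  rw [card_filter, Equiv.sum_comp w fun j => if j < a then 1 else 0, ← card_filter,
    filter_gt_eq_Iio, Fin.card_Iio]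

theorem leftSmallerCount_last {n : ℕ} (w : Perm (Fin (n + 1))) :
    leftSmallerCount w (Fin.last n) = w (Fin.last n) := by
  rw [leftSmallerCount, ← card_filter_apply_lt w (w (Fin.last n))]
  refine congrArg card (filter_congr fun j _ => and_iff_right_of_imp fun hj => ?_)
  exact Fin.lt_last_iff_ne_last.mpr (by rintro rfl; exact lt_irrefl _ hj)

/-- The permutation sending `last n` to `v` and `castSucc i` to the `e i`-th element of
`univ \ {v}`. -/
def insertLast {n : ℕ} (v : Fin (n + 1)) (e : Perm (Fin n)) : Perm (Fin (n + 1)) :=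
  (finSuccEquivLast.trans e.optionCongr).trans (finSuccEquiv' v).symm

@[simp]
theorem insertLast_last {n : ℕ} (v : Fin (n + 1)) (e : Perm (Fin n)) :
    insertLast v e (Fin.last n) = v := by
  simp [insertLast]

@[simp]
theorem insertLast_castSucc {n : ℕ} (v : Fin (n + 1)) (e : Perm (Fin n)) (i : Fin n) :
    insertLast v e i.castSucc = v.succAbove (e i) := by
  simp [insertLast]

theorem insertLast_bijective (n : ℕ) :
    Function.Bijective fun p : Fin (n + 1) × Perm (Fin n) => insertLast p.1 p.2 := by
  rw [Fintype.bijective_iff_injective_and_card]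
  refine ⟨fun ⟨v, e⟩ ⟨v', e'⟩ h => ?_, by simp [Fintype.card_perm, Nat.factorial_succ]⟩
  obtain rfl : v = v' := by simpa using congr($h (Fin.last n))
  refine Prod.ext rfl (Equiv.ext fun i => Fin.succAbove_right_injective (p := v) ?_)
  simpa using congr($h i.castSucc)

theorem leftSmallerCount_insertLast_castSucc {n : ℕ} (v : Fin (n + 1)) (e : Perm (Fin n))
    (i : Fin n) : leftSmallerCount (insertLast v e) i.castSucc = leftSmallerCount e i := by
  rw [leftSmallerCount, Fin.card_filter_univ_castSucc_of_not_last _ fun h => ?_]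
  · simp [leftSmallerCount, Fin.succAbove_lt_succAbove_iff]
  · exact not_lt_of_ge (Fin.le_last _) h.1

theorem sum_prod_leftSmallerCount {R : Type*} [CommSemiring R] (n : ℕ) (f : Fin n → ℕ → R) :
    ∑ w : Perm (Fin n), ∏ k, f k (leftSmallerCount w k) =
      ∏ k : Fin n, ∑ c ∈ range (k + 1), f k c := by
  induction n with
  | zero => simp
  | succ n ih =>
    rw [← (insertLast_bijective n).sum_comp, Fintype.sum_prod_type, Fin.prod_univ_castSucc]
    simp only [Fin.prod_univ_castSucc, leftSmallerCount_insertLast_castSucc, leftSmallerCount_last,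
      insertLast_last, ← sum_mul, ← mul_sum, ih, Fin.val_castSucc, Fin.val_last]
    rw [Fin.sum_univ_eq_sum_range (f (Fin.last n))]

end Equiv.Perm

/-- The key summation identity in the proof of Theorem 3.8 (0-based indexing):
`Σ_{w ∈ S_b} ∏_k (m_k + 2k − 2|J_w^{<k}|) = b! • ∏_k (m_k + k)`, where
`J_w^{<k} = {j < k : w(j) < w(k)}`. -/
theorem stmt5 {R : Type*} [CommRing R] (b : ℕ) (m : Fin b → R) :
    ∑ w : Equiv.Perm (Fin b), ∏ k : Fin b,
        (m k + 2 * ((k : ℕ) : R)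
          - 2 * (((Finset.univ.filter (fun j => j < k ∧ w j < w k)).card : ℕ) : R))
      = b.factorial • ∏ k : Fin b, (m k + ((k : ℕ) : R)) := by
  calc _ = ∏ k : Fin b, ∑ c ∈ range (k + 1), (m k + 2 * ((k : ℕ) : R) - 2 * c) :=
        Perm.sum_prod_leftSmallerCount b fun k c => m k + 2 * ((k : ℕ) : R) - 2 * c
    _ = ∏ k : Fin b, (((k : ℕ) : R) + 1) * (m k + k) := by
        simp only [sum_range_add_two_mul_sub_two_mul]
    _ = b.factorial • ∏ k : Fin b, (m k + ((k : ℕ) : R)) := by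
        rw [prod_mul_distrib, Fin.prod_univ_val_add_one, nsmul_eq_mul]
end

section
/- Let R be a commutative ring, n ∈ ℕ, and let f_1, …, f_n : ℕ → R be arbitrary functions. Then Σ_{w ∈ S_n} ∏_{t=1}^{n} f_t(|J_w^{<t}|) = ∏_{t=1}^{n} ( Σ_{k=0}^{t−1} f_t(k) ). (This is the product–sum interchange, equation (3.10) of the paper, which follows from the bijectivity of the inversion-table map θ_n.) -/
/-!
The inversion table `w ↦ (|J_w^{<t}|)_t` is a bijection from `S_n` onto `∏_t {0, …, t}`
(0-based positions), so the left-hand side is the expansion of the product on the right.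
It is injective because, once `w` is known at the positions after `t`, with value set `S`,
`|J_w^{<t}| = #(Iio (w t) \ S)`, which is strictly increasing in `w t ∉ S`; both sides have
`n!` elements.
-/

open Finset

theorem strictMonoOn_card_Iio_sdiff {α : Type*} [LinearOrder α] [LocallyFiniteOrderBot α]
    (S : Finset α) : StrictMonoOn (fun v => #(Iio v \ S)) {v | v ∉ S} := by
  intro v hv v' _ hvv'
  apply card_lt_card
  rw [ssubset_iff_of_subset (sdiff_subset_sdiff (Iio_subset_Iio hvv'.le) le_rfl)]
  exact ⟨v, by simp_all⟩

namespace Equiv.Perm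

variable {n : ℕ}

theorem card_lt_and_apply_lt_eq_card_Iio_sdiff (w : Perm (Fin n)) (t : Fin n) :
    #{j | j < t ∧ w j < w t} = #(Iio (w t) \ (Ioi t).map w.toEmbedding) := by
  rw [← card_map w.toEmbedding]
  congr 1
  ext u
  obtain ⟨j, rfl⟩ := w.surjective u
  simp only [mem_map_equiv, mem_filter, mem_univ, mem_sdiff, mem_Iio, mem_Ioi, symm_apply_apply,
    true_and, not_lt]
  constructor
  · rintro ⟨hjt, hw⟩
    exact ⟨hw, hjt.le⟩
  · rintro ⟨hw, hjt⟩
    exact ⟨lt_of_le_of_ne hjt (by rintro rfl; exact hw.false), hw⟩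

def inversionTable (w : Perm (Fin n)) (t : Fin n) : Fin (t + 1) :=
  ⟨#{j | j < t ∧ w j < w t}, Nat.lt_succ_of_le <|
    (card_le_card fun _ hj => mem_Iio.mpr (mem_filter.mp hj).2.1).trans_eq (Fin.card_Iio t)⟩

theorem inversionTable_injective : Function.Injective (inversionTable (n := n)) := by
  intro w w' h
  ext1 t
  induction t using WellFoundedGT.induction with
  | _ t ih =>
  have hS : (Ioi t).map w.toEmbedding = (Ioi t).map w'.toEmbedding := by
    simp only [map_eq_image]
    exact image_congr fun s hs => ih s (mem_Ioi.mp hs)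
  have hcard := congrArg Fin.val (congrFun h t)
  simp only [inversionTable, card_lt_and_apply_lt_eq_card_Iio_sdiff, hS] at hcard
  refine (strictMonoOn_card_Iio_sdiff _).injOn ?_ ?_ hcard
  · simp [← hS, mem_map_equiv]
  · simp [mem_map_equiv]

theorem inversionTable_bijective : Function.Bijective (inversionTable (n := n)) := by
  rw [Fintype.bijective_iff_injective_and_card]
  refine ⟨inversionTable_injective, ?_⟩
  simp [Fintype.card_perm, Fin.prod_univ_eq_prod_range (· + 1), prod_range_add_one_eq_factorial]

end Equiv.Perm

/-- Equation (3.10) of the paper (product–sum interchange, 0-based indexing):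
`Σ_{w ∈ S_n} ∏_t f_t(|J_w^{<t}|) = ∏_t Σ_{k=0}^{t} f_t(k)`, where
`J_w^{<t} = {j < t : w(j) < w(t)}`. -/
theorem stmt7 {R : Type*} [CommRing R] (n : ℕ) (f : Fin n → ℕ → R) :
    ∑ w : Equiv.Perm (Fin n), ∏ t : Fin n,
        f t ((Finset.univ.filter (fun j => j < t ∧ w j < w t)).card)
      = ∏ t : Fin n, ∑ k ∈ Finset.range ((t : ℕ) + 1), f t k := by
  refine (Fintype.sum_bijective _ Equiv.Perm.inversionTable_bijective _
    (fun g => ∏ t, f t (g t)) fun w => rfl).trans ?_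
  rw [← Fintype.prod_sum fun (t : Fin n) (k : Fin (t + 1)) => f t k]
  exact prod_congr rfl fun t _ => Fin.sum_univ_eq_sum_range (f t) _
end

section
/- For every n ∈ ℕ and every integer ℓ, Σ_{w ∈ S_n} ∏_{t=1}^{n} ( ℓ − 2·|J_w^{<t}| ) = n! · ∏_{j=0}^{n−1} (ℓ − j). (This is the dimension formula for the cyclotomic nilHecke algebra H^{(0)}_{ℓ,n} of Corollary 3.11, expressed as a pure integer identity.) -/
/-!
Split a permutation `w` of `Fin (n+1)` into its last value `v = w (last n)` and the
order-preserving relabelling `e ∈ S_n` of its remaining values. The `j < last` with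
`w j < v` are exactly the `v` preimages of the values below `v`, and for earlier
positions the counts are those of `e`. So the weight of `w` is that of `e` times
`ℓ - 2v`, and summing over `v` contributes the factor `∑_{v ≤ n} (ℓ - 2v) = (n+1)(ℓ - n)`.
-/

open Finset Equiv

namespace NilHecke

variable {n : ℕ}

/-- The set `J_w^{<t}`. -/
def lowerBefore (w : Perm (Fin n)) (t : Fin n) : Finset (Fin n) :=
  univ.filter fun j => j < t ∧ w j < w t

def weight {R : Type*} [CommRing R] (l : R) (w : Perm (Fin n)) : R :=
  ∏ t, (l - 2 * (#(lowerBefore w t) : R))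

def insertLast (v : Fin (n + 1)) (e : Perm (Fin n)) : Perm (Fin (n + 1)) :=
  finSuccEquivLast.trans (e.optionCongr.trans (finSuccEquiv' v).symm)

@[simp] lemma insertLast_last (v : Fin (n + 1)) (e : Perm (Fin n)) :
    insertLast v e (Fin.last n) = v := by
  simp [insertLast]

@[simp] lemma insertLast_castSucc (v : Fin (n + 1)) (e : Perm (Fin n)) (i : Fin n) :
    insertLast v e i.castSucc = v.succAbove (e i) := by
  simp [insertLast, finSuccEquiv'_symm_some]

lemma insertLast_bijective :
    Function.Bijective fun p : Fin (n + 1) × Perm (Fin n) => insertLast p.1 p.2 := by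
  rw [Fintype.bijective_iff_injective_and_card]
  refine ⟨?_, by simp [Fintype.card_perm, Nat.factorial_succ]⟩
  rintro ⟨v, e⟩ ⟨v', e'⟩ h
  obtain rfl : v = v' := by simpa using congr($h (Fin.last n))
  have : e = e' := Equiv.ext fun i => Fin.succAbove_right_injective (p := v) <| by
    simpa using congr($h i.castSucc)
  rw [this]

lemma card_lowerBefore_last (w : Perm (Fin (n + 1))) :
    #(lowerBefore w (Fin.last n)) = w (Fin.last n) := by
  have : lowerBefore w (Fin.last n) = (Iio (w (Fin.last n))).map w.symm.toEmbedding := by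
    ext j
    simp only [lowerBefore, mem_filter, mem_univ, true_and, mem_map_equiv, symm_symm, mem_Iio]
    exact ⟨And.right, fun h => ⟨(Fin.le_last j).lt_of_ne (by rintro rfl; exact h.false), h⟩⟩
  rw [this, card_map, Fin.card_Iio]

lemma lowerBefore_insertLast_castSucc (v : Fin (n + 1)) (e : Perm (Fin n)) (t : Fin n) :
    lowerBefore (insertLast v e) t.castSucc = (lowerBefore e t).map Fin.castSuccEmb := by
  ext j
  induction j using Fin.lastCases with
  | last => simp [lowerBefore, (Fin.castSucc_lt_last t).not_gt]
  | cast i => simp [lowerBefore, Fin.succAbove_lt_succAbove_iff]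

lemma weight_insertLast {R : Type*} [CommRing R] (l : R) (v : Fin (n + 1)) (e : Perm (Fin n)) :
    weight l (insertLast v e) = weight l e * (l - 2 * (v : R)) := by
  simp only [weight, Fin.prod_univ_castSucc, lowerBefore_insertLast_castSucc, card_map,
    card_lowerBefore_last, insertLast_last]

lemma sum_sub_two_mul_fin {R : Type*} [CommRing R] (l : R) (n : ℕ) :
    ∑ v : Fin (n + 1), (l - 2 * (v : R)) = (n + 1) * (l - n) := by
  induction n with
  | zero => simp
  | succ n ih =>
    rw [Fin.sum_univ_castSucc]
    simp only [Fin.val_castSucc, Fin.val_last, ih]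
    push_cast
    ring

theorem sum_weight {R : Type*} [CommRing R] (l : R) (n : ℕ) :
    ∑ w : Perm (Fin n), weight l w = n.factorial * ∏ j ∈ range n, (l - j) := by
  induction n with
  | zero => simp [weight]
  | succ n ih =>
    rw [← insertLast_bijective.sum_comp, Fintype.sum_prod_type_right]
    simp only [weight_insertLast, ← sum_mul, ← mul_sum, ih, sum_sub_two_mul_fin,
      prod_range_succ, Nat.factorial_succ]
    push_cast
    ring

end NilHecke

/-- Corollary 3.11 of the paper (dimension of the cyclotomic nilHecke algebra
`H^{(0)}_{ℓ,n}`), as a pure integer identity: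
`Σ_{w ∈ S_n} ∏_t (ℓ − 2|J_w^{<t}|) = n! · ∏_{j=0}^{n−1} (ℓ − j)`. -/
theorem stmt9 (n : ℕ) (l : ℤ) :
    ∑ w : Equiv.Perm (Fin n), ∏ t : Fin n,
        (l - 2 * ((Finset.univ.filter (fun j => j < t ∧ w j < w t)).card : ℤ))
      = (n.factorial : ℤ) * ∏ j ∈ Finset.range n, (l - (j : ℤ)) :=
  NilHecke.sum_weight l n
end

section
/- Let I be a set, a : I × I → ℤ a function, L¹, L² : I → ℤ functions, ν ∈ I^n, and w ∈ S_n. For a subset A ⊆ {1,…,n} with increasing enumeration A = {i_1 < ⋯ < i_k}, set ν_A := (ν_{i_1},…,ν_{i_k}) ∈ I^k, and let w_A ∈ S_k be the permutation induced by w on A: writing w(A) = {j_1 < ⋯ < j_k}, w_A is determined by j_{w_A(s)} = w(i_s) for all 1 ≤ s ≤ k. For a function L : I → ℤ, a permutation u ∈ S_k and η ∈ I^k, set N^L(u,η,t) := L(η_t) − Σ_{j ∈ J_u^{<t}} a(η_t, η_j), where J_u^{<t} := {1 ≤ j < t : u(j) < u(t)}. Then Σ_{A ⊆ {1,…,n}}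 ( ∏_{k=1}^{|A|} N^{L¹}(w_A, ν_A, k) ) · ( ∏_{k=1}^{|A^c|} N^{L²}(w_{A^c}, ν_{A^c}, k) ) = ∏_{t=1}^{n} N^{L¹+L²}(w, ν, t), where A^c is the complement of A in {1,…,n}. (This is the key level-reduction identity, equation (4.1), in the proof of Theorem 4.4.) -/
/-- The subtuple `ν_A` of `ν` indexed by the increasing enumeration of `A`. -/
def subTuple {I : Type*} {n : ℕ} (ν : Fin n → I) (A : Finset (Fin n)) :
    Fin A.card → I :=
  fun s => ν (A.orderIsoOfFin rfl s).1

/-- The permutation (as a map `Fin A.card → Fin A.card`) induced by `w` on the subset `A`: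
writing `A = {i_1 < ⋯ < i_k}` and `w(A) = {j_1 < ⋯ < j_k}`, it sends `s` to the index `r`
with `j_r = w(i_s)`. -/
def inducedMap {n : ℕ} (w : Equiv.Perm (Fin n)) (A : Finset (Fin n)) :
    Fin A.card → Fin A.card :=
  fun s => ((A.image ⇑w).orderIsoOfFin
      (Finset.card_image_of_injective A w.injective)).symm
    ⟨w (A.orderIsoOfFin rfl s).1,
      Finset.mem_image_of_mem _ (A.orderIsoOfFin rfl s).2⟩

/-- `N^L(u,η,t) = L(η_t) − Σ_{j ∈ J_u^{<t}} a(η_t, η_j)` for an arbitrary map `u`. -/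
def Nf {I : Type*} (a : I → I → ℤ) (L : I → ℤ) {k : ℕ}
    (u : Fin k → Fin k) (η : Fin k → I) (t : Fin k) : ℤ :=
  L (η t) - ∑ j ∈ Finset.univ.filter (fun j => j < t ∧ u j < u t), a (η t) (η j)

lemma sum_split_aux {n : ℕ} (p : Fin n → Prop) [DecidablePred p] (a : Fin n → ℤ)
    {B s' : Finset (Fin n)} (hB : B ⊆ s') :
    (∑ j ∈ B.filter p, a j) + (∑ j ∈ (s' \ B).filter p, a j)
      = ∑ j ∈ s'.filter p, a j := by
  rw [← Finset.sum_union (Finset.disjoint_filter_filter Finset.disjoint_sdiff),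
    ← Finset.filter_union, Finset.union_sdiff_of_subset hB]

/-- Abstract level-reduction identity over a finset, by induction removing the maximum. -/
lemma key_levelred {n : ℕ} (P : Fin n → Fin n → Prop) [DecidableRel P]
    (hP : ∀ i j, P i j → j < i) (f g : Fin n → ℤ) (a : Fin n → Fin n → ℤ)
    (s : Finset (Fin n)) :
    ∑ A ∈ s.powerset,
        (∏ i ∈ A, (f i - ∑ j ∈ A.filter (fun j => P i j), a i j)) *
        (∏ i ∈ s \ A, (g i - ∑ j ∈ (s \ A).filter (fun j => P i j), a i j))
      = ∏ i ∈ s, (f i + g i - ∑ j ∈ s.filter (fun j => P i j), a i j) := by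
  induction s using Finset.strongInduction with
  | _ s ih =>
    rcases s.eq_empty_or_nonempty with rfl | hne
    · simp
    · have hms : s.max' hne ∈ s := s.max'_mem hne
      have hmem : ∀ i ∈ s, ¬ P i (s.max' hne) := fun i hi hPim =>
        absurd (s.le_max' i hi) (not_le.mpr (hP i _ hPim))
      obtain ⟨m, s', hm', rfl, hmx⟩ : ∃ m s', m ∉ s' ∧ insert m s' = s ∧ m = s.max' hne :=
        ⟨s.max' hne, s.erase (s.max' hne), s.notMem_erase _, Finset.insert_erase hms, rfl⟩
      rw [← hmx] at hmem
      have hPmm : ¬ P m m := fun h => lt_irrefl m (hP m m h)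
      have hmem2 : ∀ i ∈ s', ¬ P i m := fun i hi => hmem i (Finset.mem_insert_of_mem hi)
      rw [Finset.sum_powerset_insert hm']
      have e1 : ∀ B ∈ s'.powerset,
          (∏ i ∈ B, (f i - ∑ j ∈ B.filter (fun j => P i j), a i j)) *
          (∏ i ∈ (insert m s') \ B,
              (g i - ∑ j ∈ ((insert m s') \ B).filter (fun j => P i j), a i j))
          = (g m - ∑ j ∈ (s' \ B).filter (fun j => P m j), a m j) *
            ((∏ i ∈ B, (f i - ∑ j ∈ B.filter (fun j => P i j), a i j)) *
             (∏ i ∈ s' \ B, (g i - ∑ j ∈ (s' \ B).filter (fun j => P i j), a i j))) := by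
        intro B hB
        rw [Finset.mem_powerset] at hB
        have hmB : m ∉ B := fun h => hm' (hB h)
        have hsd : (insert m s') \ B = insert m (s' \ B) :=
          Finset.insert_sdiff_of_notMem _ hmB
        have hms' : m ∉ s' \ B := fun h => hm' (Finset.mem_sdiff.mp h).1
        rw [hsd, Finset.prod_insert hms', Finset.filter_insert, if_neg hPmm]
        have hq : ∏ i ∈ s' \ B,
            (g i - ∑ j ∈ (insert m (s' \ B)).filter (fun j => P i j), a i j)
            = ∏ i ∈ s' \ B, (g i - ∑ j ∈ (s' \ B).filter (fun j => P i j), a i j) :=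
          Finset.prod_congr rfl (fun i hi => by
            rw [Finset.filter_insert, if_neg (hmem2 i (Finset.mem_sdiff.mp hi).1)])
        rw [hq]; ring
      have e2 : ∀ B ∈ s'.powerset,
          (∏ i ∈ insert m B, (f i - ∑ j ∈ (insert m B).filter (fun j => P i j), a i j)) *
          (∏ i ∈ (insert m s') \ (insert m B),
              (g i - ∑ j ∈ ((insert m s') \ (insert m B)).filter (fun j => P i j), a i j))
          = (f m - ∑ j ∈ B.filter (fun j => P m j), a m j) *
            ((∏ i ∈ B, (f i - ∑ j ∈ B.filter (fun j => P i j), a i j)) *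
             (∏ i ∈ s' \ B, (g i - ∑ j ∈ (s' \ B).filter (fun j => P i j), a i j))) := by
        intro B hB
        rw [Finset.mem_powerset] at hB
        have hmB : m ∉ B := fun h => hm' (hB h)
        have hsd : (insert m s') \ (insert m B) = s' \ B := by
          ext x
          simp only [Finset.mem_sdiff, Finset.mem_insert, not_or]
          constructor
          · rintro ⟨hx1 | hx1, hx2, hx3⟩
            · exact absurd hx1 hx2
            · exact ⟨hx1, hx3⟩
          · rintro ⟨hx1, hx2⟩
            exact ⟨Or.inr hx1, fun h => hm' (h ▸ hx1), hx2⟩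
        rw [hsd, Finset.prod_insert hmB, Finset.filter_insert, if_neg hPmm]
        have hq : ∏ i ∈ B,
            (f i - ∑ j ∈ (insert m B).filter (fun j => P i j), a i j)
            = ∏ i ∈ B, (f i - ∑ j ∈ B.filter (fun j => P i j), a i j) :=
          Finset.prod_congr rfl (fun i hi => by
            rw [Finset.filter_insert, if_neg (hmem2 i (hB hi))])
        rw [hq]; ring
      rw [Finset.sum_congr rfl e1, Finset.sum_congr rfl e2, ← Finset.sum_add_distrib]
      have e3 : ∀ B ∈ s'.powerset,
          (g m - ∑ j ∈ (s' \ B).filter (fun j => P m j), a m j) *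
            ((∏ i ∈ B, (f i - ∑ j ∈ B.filter (fun j => P i j), a i j)) *
             (∏ i ∈ s' \ B, (g i - ∑ j ∈ (s' \ B).filter (fun j => P i j), a i j))) +
          (f m - ∑ j ∈ B.filter (fun j => P m j), a m j) *
            ((∏ i ∈ B, (f i - ∑ j ∈ B.filter (fun j => P i j), a i j)) *
             (∏ i ∈ s' \ B, (g i - ∑ j ∈ (s' \ B).filter (fun j => P i j), a i j)))
          = (f m + g m - ∑ j ∈ s'.filter (fun j => P m j), a m j) *
            ((∏ i ∈ B, (f i - ∑ j ∈ B.filter (fun j => P i j), a i j)) *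
             (∏ i ∈ s' \ B, (g i - ∑ j ∈ (s' \ B).filter (fun j => P i j), a i j))) := by
        intro B hB
        rw [Finset.mem_powerset] at hB
        rw [← sum_split_aux (fun j => P m j) (a m) hB]
        ring
      rw [Finset.sum_congr rfl e3, ← Finset.mul_sum, ih s' (Finset.ssubset_insert hm'),
        Finset.prod_insert hm', Finset.filter_insert, if_neg hPmm]
      congr 1
      exact Finset.prod_congr rfl (fun i hi => by
        rw [Finset.filter_insert, if_neg (hmem2 i hi)])

lemma inducedMap_lt_iff {n : ℕ} (w : Equiv.Perm (Fin n)) (A : Finset (Fin n))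
    (j t : Fin A.card) :
    inducedMap w A j < inducedMap w A t ↔
      w ((A.orderIsoOfFin rfl j) : Fin n) < w ((A.orderIsoOfFin rfl t) : Fin n) := by
  unfold inducedMap
  rw [OrderIso.lt_iff_lt]
  exact Subtype.mk_lt_mk

lemma prod_Nf {I : Type*} (a : I → I → ℤ) (L : I → ℤ) {n : ℕ} (ν : Fin n → I)
    (w : Equiv.Perm (Fin n)) (A : Finset (Fin n)) :
    ∏ t : Fin A.card, Nf a L (inducedMap w A) (subTuple ν A) t
      = ∏ i ∈ A, (L (ν i) - ∑ j ∈ A.filter (fun j => j < i ∧ w j < w i), a (ν i) (ν j)) := by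
  set e := A.orderIsoOfFin rfl with he
  have step : ∀ t : Fin A.card,
      Nf a L (inducedMap w A) (subTuple ν A) t
        = L (ν (e t)) - ∑ j ∈ A.filter (fun j => j < (e t : Fin n) ∧ w j < w (e t : Fin n)),
            a (ν (e t)) (ν j) := by
    intro t
    unfold Nf subTuple
    congr 1
    refine Finset.sum_bij (fun j _ => ((e j : Fin n))) ?_ ?_ ?_ ?_
    · intro j hj
      rw [Finset.mem_filter] at hj ⊢
      refine ⟨(e j).2, ?_, ?_⟩
      · exact_mod_cast (e.lt_iff_lt.mpr hj.2.1 : e j < e t)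
      · exact (inducedMap_lt_iff w A j t).mp hj.2.2
    · intro j1 _ j2 _ h
      exact e.injective (Subtype.ext h)
    · intro x hx
      rw [Finset.mem_filter] at hx
      refine ⟨e.symm ⟨x, hx.1⟩, ?_, by simp⟩
      rw [Finset.mem_filter]
      have h1 : (e (e.symm ⟨x, hx.1⟩) : Fin n) = x := by simp
      refine ⟨Finset.mem_univ _, ?_, ?_⟩
      · have : e (e.symm ⟨x, hx.1⟩) < e t := by
          rw [← Subtype.coe_lt_coe, h1]; exact hx.2.1
        exact e.lt_iff_lt.mp this
      · rw [inducedMap_lt_iff, h1]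
        exact hx.2.2
    · intro j hj
      rfl
  rw [Fintype.prod_congr _ _ step]
  rw [← Finset.prod_coe_sort A (fun i => L (ν i) - ∑ j ∈ A.filter (fun j => j < i ∧ w j < w i), a (ν i) (ν j))]
  exact e.bijective.prod_comp
    (fun i : A => L (ν i) - ∑ j ∈ A.filter (fun j => j < (i : Fin n) ∧ w j < w (i : Fin n)), a (ν i) (ν j))

/-- Equation (4.1) of the paper (key level-reduction identity):
`Σ_{A ⊆ {1,…,n}} (∏_k N^{L¹}(w_A, ν_A, k)) · (∏_k N^{L²}(w_{Aᶜ}, ν_{Aᶜ}, k))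
  = ∏_t N^{L¹+L²}(w, ν, t)`. -/
theorem stmt10 {I : Type*} (a : I → I → ℤ) (L1 L2 : I → ℤ)
    (n : ℕ) (ν : Fin n → I) (w : Equiv.Perm (Fin n)) :
    ∑ A : Finset (Fin n),
        (∏ t : Fin A.card, Nf a L1 (inducedMap w A) (subTuple ν A) t) *
        (∏ t : Fin Aᶜ.card, Nf a L2 (inducedMap w Aᶜ) (subTuple ν Aᶜ) t)
      = ∏ t : Fin n, Nf a (fun i => L1 i + L2 i) (⇑w) ν t := by
  have hkey := key_levelred (fun i j => j < i ∧ w j < w i) (fun i j h => h.1)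
    (fun i => L1 (ν i)) (fun i => L2 (ν i)) (fun i j => a (ν i) (ν j)) Finset.univ
  rw [← Finset.powerset_univ]
  simp only [prod_Nf]
  simp only [Finset.compl_eq_univ_sdiff, Nf]
  exact hkey
end

section
/- Assume a(i,i) = 2 for all i ∈ I. Let ν^1,…,ν^p ∈ I be pairwise distinct and let ν̃ ∈ I^n be the block tuple with ν̃_k = ν^i for c_{i−1} < k ≤ c_i. Set N_i := L(ν^i) − Σ_{r=1}^{i−1} b_r · a(ν^i, ν^r) for 1 ≤ i ≤ p (so N_i = N(1, ν̃, c_{i−1}+1)). Then Σ_{w ∈ S(ν̃,ν̃)} ∏_{t=1}^{n} N(w, ν̃, t) = ∏_{i=1}^{p} ( b_i! · ∏_{j=0}^{b_i−1} (N_i − j) ). Moreover, if in addition a(i,j) ≤ 0 for all i ≠ j and L(i) ≥ 0 for all i, then this quantity is nonzero if and only if N_i ≥ b_i for every 1 ≤ i ≤ p. (This is the combinatorial content of Theorem 5.2 of the paper, computing dim e(ν̃)R^Λ(β)e(ν̃).) -/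
open Finset Equiv

def smallerBefore {m : ℕ} (σ : Perm (Fin m)) (s : Fin m) : ℕ :=
  #{j | j < s ∧ σ j < σ s}

def insertLast {m : ℕ} (v : Fin (m + 1)) (τ : Perm (Fin m)) : Perm (Fin (m + 1)) :=
  (finSuccEquiv' (Fin.last m)).trans ((optionCongr τ).trans (finSuccEquiv' v).symm)

@[simp]
lemma insertLast_last {m : ℕ} (v : Fin (m + 1)) (τ : Perm (Fin m)) :
    insertLast v τ (Fin.last m) = v := by
  simp [insertLast, finSuccEquiv'_at]

@[simp]
lemma insertLast_castSucc {m : ℕ} (v : Fin (m + 1)) (τ : Perm (Fin m)) (j : Fin m) :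
    insertLast v τ j.castSucc = v.succAbove (τ j) := by
  simp [insertLast, ← Fin.succAbove_last, finSuccEquiv'_succAbove]

lemma insertLast_bijective (m : ℕ) :
    Function.Bijective (fun x : Fin (m + 1) × Perm (Fin m) => insertLast x.1 x.2) := by
  refine (Fintype.bijective_iff_injective_and_card _).2
    ⟨?_, by simp [Fintype.card_perm, Nat.factorial_succ]⟩
  rintro ⟨v, τ⟩ ⟨v', τ'⟩ h
  have hv : v = v' := by simpa using congr($h (Fin.last m))
  subst hv
  have hτ : τ = τ' := Equiv.ext fun j => by simpa using congr($h j.castSucc)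
  rw [hτ]

lemma smallerBefore_insertLast_last {m : ℕ} (v : Fin (m + 1)) (τ : Perm (Fin m)) :
    smallerBefore (insertLast v τ) (Fin.last m) = v := by
  set w := insertLast v τ
  have hlast : ∀ j, w j < v → j < Fin.last m := fun j hj =>
    Fin.lt_last_iff_ne_last.2 fun h => by simp [w, h] at hj
  calc smallerBefore w (Fin.last m) = #{j | w j < v} := by
        simp only [smallerBefore, insertLast_last, w]
        exact congrArg card (filter_congr fun j _ => and_iff_right_of_imp (hlast j))
    _ = #(Iio v) := card_equiv w (by simp)
    _ = v := Fin.card_Iio v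

lemma smallerBefore_insertLast_castSucc {m : ℕ} (v : Fin (m + 1)) (τ : Perm (Fin m)) (s : Fin m) :
    smallerBefore (insertLast v τ) s.castSucc = smallerBefore τ s := by
  simp only [smallerBefore, card_filter, Fin.sum_univ_castSucc, insertLast_castSucc,
    insertLast_last, Fin.castSucc_lt_castSucc_iff, Fin.succAbove_lt_succAbove_iff,
    (Fin.castSucc_lt_last s).not_gt, false_and, if_false, add_zero]

theorem sum_prod_smallerBefore {R : Type*} [CommSemiring R] (m : ℕ) (f : ℕ → ℕ → R) :
    ∑ σ : Perm (Fin m), ∏ s : Fin m, f s (smallerBefore σ s) =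
      ∏ s ∈ range m, ∑ v ∈ range (s + 1), f s v := by
  induction m with
  | zero => simp
  | succ m ih =>
    rw [← Fintype.sum_bijective _ (insertLast_bijective m) _ _ fun _ => rfl,
      Fintype.sum_prod_type_right, prod_range_succ, ← ih, sum_mul, ← Fin.sum_univ_eq_sum_range]
    refine sum_congr rfl fun τ _ => ?_
    simp only [Fin.prod_univ_castSucc, smallerBefore_insertLast_castSucc,
      smallerBefore_insertLast_last, Fin.val_castSucc, Fin.val_last, mul_sum]

theorem sum_prod_sub_two_mul_smallerBefore (m : ℕ) (X : ℤ) :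
    ∑ σ : Perm (Fin m), ∏ s, (X - 2 * smallerBefore σ s) =
      m.factorial * ∏ j ∈ range m, (X - j) := by
  have hrow : ∀ j : ℕ, ∑ v ∈ range (j + 1), (X - 2 * v) = (j + 1) * (X - j) := by
    intro j
    induction j with
    | zero => simp
    | succ j ih => rw [sum_range_succ, ih]; push_cast; ring
  rw [sum_prod_smallerBefore m (fun _ v => X - 2 * v), prod_congr rfl fun j _ => hrow j,
    prod_mul_distrib, ← prod_range_add_one_eq_factorial]
  push_cast
  rfl

lemma prod_range_sub_ne_zero_iff {X : ℤ} (hX : 0 ≤ X) (m : ℕ) :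
    ∏ j ∈ range m, (X - j) ≠ 0 ↔ (m : ℤ) ≤ X := by
  rw [prod_ne_zero_iff]
  refine ⟨fun h => ?_, fun h j hj => by grind⟩
  by_contra! hlt
  exact h X.toNat (mem_range.2 (by omega)) (by omega)

section Fiberwise

variable {α : Type*} {β : α → Type*}

lemma exists_sigmaCongrRight_eq {u : Perm (Σ a, β a)} (hu : ∀ k, (u k).1 = k.1) :
    ∃ σ : ∀ a, Perm (β a), Perm.sigmaCongrRight σ = u := by
  refine ⟨fun a => (sigmaSubtype a).permCongr (u.subtypePerm fun k => by rw [hu]), ?_⟩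
  ext1 ⟨a, s⟩
  simp only [sigmaCongrRight_apply, permCongr_apply, Perm.subtypePerm_apply, sigmaSubtype_apply]
  exact Sigma.ext (hu ⟨a, s⟩).symm (eqRec_heq _ _)

lemma sum_filter_fst_eq_eq_sum_sigmaCongrRight [Fintype α] [DecidableEq α]
    [∀ a, Fintype (β a)] [∀ a, DecidableEq (β a)] {M : Type*} [AddCommMonoid M]
    (F : Perm (Σ a, β a) → M) :
    ∑ u with ∀ k, (u k).1 = k.1, F u = ∑ σ : ∀ a, Perm (β a), F (Perm.sigmaCongrRight σ) := by
  symm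
  refine sum_nbij Perm.sigmaCongrRight (fun σ _ => by simp)
    (Perm.sigmaCongrRightHom_injective.injOn) (fun u hu => ?_) (fun _ _ => rfl)
  obtain ⟨σ, rfl⟩ := exists_sigmaCongrRight_eq (mem_filter.1 hu).2
  exact ⟨σ, mem_univ _, rfl⟩

lemma forall_apply_permCongr_inv_iff {α γ I : Type*} {β : α → Type*} (e : (Σ a, β a) ≃ γ)
    {ν : γ → I} {nb : α → I} (hnb : Function.Injective nb) (hν : ∀ k, ν (e k) = nb k.1)
    (u : Perm (Σ a, β a)) :
    (∀ x, ν ((e.permCongr u)⁻¹ x) = ν x) ↔ ∀ k, (u k).1 = k.1 := by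
  have hinv (k : Σ a, β a) : (e.permCongr u)⁻¹ (e k) = e (u⁻¹ k) := by
    rw [Perm.inv_def, symm_apply_eq]; simp
  calc (∀ x, ν ((e.permCongr u)⁻¹ x) = ν x) ↔ ∀ k, (u⁻¹ k).1 = k.1 := by
        simp only [← e.forall_congr_right (q := fun x => ν ((e.permCongr u)⁻¹ x) = ν x), hinv, hν,
          hnb.eq_iff]
    _ ↔ ∀ k, (u k).1 = k.1 := by
        rw [← u.forall_congr_right]
        simp [eq_comm]

end Fiberwise

section Blocks

variable {b c : ℕ → ℕ}

lemma cumsum_mono (hc : ∀ i, c i = ∑ j ∈ range i, b j) : Monotone c := fun i j hij => by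
  simpa only [hc] using sum_le_sum_of_subset (range_subset_range.2 hij)

lemma cumsum_add_lt_cumsum_add_iff (hc : ∀ i, c i = ∑ j ∈ range i, b j) {r i s' s : ℕ}
    (hs' : s' < b r) (hs : s < b i) : c r + s' < c i + s ↔ r < i ∨ r = i ∧ s' < s := by
  have hsucc : ∀ j, c (j + 1) = c j + b j := fun j => by simp only [hc, sum_range_succ]
  rcases lt_trichotomy r i with hri | rfl | hir
  · have := cumsum_mono hc hri
    grind
  · grind
  · have := cumsum_mono hc hir
    grind

lemma exists_sigmaFinEquiv_cumsum (hc : ∀ i, c i = ∑ j ∈ range i, b j) {p n : ℕ} (hcp : c p = n) :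
    ∃ e : (Σ i : Fin p, Fin (b i)) ≃ Fin n, ∀ i s, (e ⟨i, s⟩ : ℕ) = c i + s := by
  have hsum : ∑ i : Fin p, b i = n := by rw [Fin.sum_univ_eq_sum_range b, ← hc, hcp]
  refine ⟨finSigmaFinEquiv.trans (finCongr hsum), fun i s => ?_⟩
  simp [finSigmaFinEquiv_apply, hc, Fin.sum_univ_eq_sum_range b]

end Blocks

section BlockPerm

variable {n p : ℕ} {b c : ℕ → ℕ} (hc : ∀ i, c i = ∑ j ∈ range i, b j)
  {e : (Σ i : Fin p, Fin (b i)) ≃ Fin n} (he : ∀ i s, (e ⟨i, s⟩ : ℕ) = c i + s)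
include hc he

lemma blockEnum_lt_iff {r i : Fin p} (s' : Fin (b r)) (s : Fin (b i)) :
    e ⟨r, s'⟩ < e ⟨i, s⟩ ↔ r < i ∨ r = i ∧ (s' : ℕ) < s := by
  rw [Fin.lt_def, he, he, cumsum_add_lt_cumsum_add_iff hc s'.2 s.2, Fin.lt_def, Fin.ext_iff]

lemma sum_ite_blockEnum_lt {M : Type*} [AddCommMonoid M] (σ : ∀ i : Fin p, Perm (Fin (b i)))
    (x : ℕ → M) (r i : Fin p) (s : Fin (b i)) :
    ∑ s' : Fin (b r),
      (if e ⟨r, s'⟩ < e ⟨i, s⟩ ∧ e ⟨r, σ r s'⟩ < e ⟨i, σ i s⟩ then x r else 0) =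
      (if (r : ℕ) < i then b r • x r else 0) +
        if r = i then smallerBefore (σ i) s • x i else 0 := by
  simp only [blockEnum_lt_iff hc he]
  rcases lt_trichotomy r i with hri | rfl | hir
  · simp [hri, hri.ne]
  · simp [← sum_filter, smallerBefore]
  · simp [hir.not_gt, hir.ne']

lemma Nfun_permCongr_sigmaCongrRight {I : Type*} (a : I → I → ℤ) (L : I → ℤ)
    (ha : ∀ i, a i i = 2) {nb : ℕ → I} {ν : Fin n → I} (hν : ∀ i s, ν (e ⟨i, s⟩) = nb i)
    (σ : ∀ i : Fin p, Perm (Fin (b i))) (i : Fin p) (s : Fin (b i)) :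
    Nfun a L (e.permCongr (Perm.sigmaCongrRight σ)) ν (e ⟨i, s⟩) =
      L (nb i) - ∑ r ∈ range i, (b r : ℤ) * a (nb i) (nb r) - 2 * smallerBefore (σ i) s := by
  have hfilter : (range p).filter (· < (i : ℕ)) = range i := by
    ext r; simp only [mem_filter, mem_range]; omega
  rw [Nfun, hν, sum_filter, ← e.sum_comp, Fintype.sum_sigma]
  simp only [permCongr_apply, symm_apply_apply, sigmaCongrRight_apply, hν]
  rw [sum_congr rfl fun r _ => sum_ite_blockEnum_lt hc he σ (fun r => a (nb i) (nb r)) r i s,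
    sum_add_distrib, sum_ite_eq', if_pos (mem_univ _),
    Fin.sum_univ_eq_sum_range (fun r => if r < (i : ℕ) then b r • a (nb i) (nb r) else 0),
    ← sum_filter, hfilter, ha]
  simp only [nsmul_eq_mul]
  ring

lemma sum_stabilizer_prod_Nfun {I : Type*} [DecidableEq I] (a : I → I → ℤ) (L : I → ℤ)
    (ha : ∀ i, a i i = 2) {nb : ℕ → I} (hnb : Function.Injective fun i : Fin p => nb i)
    {ν : Fin n → I} (hν : ∀ i s, ν (e ⟨i, s⟩) = nb i) {N : ℕ → ℤ}
    (hN : ∀ i, N i = L (nb i) - ∑ r ∈ range i, (b r : ℤ) * a (nb i) (nb r)) :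
    ∑ w : Perm (Fin n) with ∀ k, ν (w⁻¹ k) = ν k, ∏ t, Nfun a L w ν t =
      ∏ i ∈ range p, ((b i).factorial * ∏ j ∈ range (b i), (N i - j)) := by
  rw [← sum_equiv (s := {u | ∀ k, (u k).1 = k.1}) e.permCongr (fun u => by
      simp only [mem_filter, mem_univ, true_and]
      exact (forall_apply_permCongr_inv_iff e hnb (fun k => hν k.1 k.2) u).symm)
    (fun _ _ => rfl), sum_filter_fst_eq_eq_sum_sigmaCongrRight]
  simp only [← e.prod_comp, Fintype.prod_sigma, Nfun_permCongr_sigmaCongrRight hc he a L ha hν,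
    ← hN]
  rw [← Fintype.prod_sum fun (i : Fin p) (τ : Perm (Fin (b i))) =>
    ∏ s, (N i - 2 * smallerBefore τ s)]
  simp only [sum_prod_sub_two_mul_smallerBefore]
  exact Fin.prod_univ_eq_prod_range
    (fun i => ((b i).factorial : ℤ) * ∏ j ∈ range (b i), (N i - j)) p

end BlockPerm

theorem stmt13_general {I : Type*} [DecidableEq I] (a : I → I → ℤ) (L : I → ℤ)
    (ha : ∀ i, a i i = 2)
    (n p : ℕ)
    (b : ℕ → ℕ)
    (c : ℕ → ℕ) (hc : ∀ i, c i = ∑ j ∈ Finset.range i, b j) (hcp : c p = n)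
    (nb : ℕ → I) (hdist : ∀ i < p, ∀ j < p, i ≠ j → nb i ≠ nb j)
    (ν : Fin n → I)
    (hν : ∀ i < p, ∀ k : Fin n, c i ≤ (k : ℕ) → (k : ℕ) < c (i + 1) → ν k = nb i)
    (Ni : ℕ → ℤ)
    (hNi : ∀ i, Ni i = L (nb i) - ∑ r ∈ Finset.range i, (b r : ℤ) * a (nb i) (nb r)) :
    (∑ w ∈ Finset.univ.filter (fun w : Equiv.Perm (Fin n) => ∀ k, ν (w⁻¹ k) = ν k),
        ∏ t : Fin n, Nfun a L w ν t
      = ∏ i ∈ Finset.range p,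
          (((b i).factorial : ℤ) * ∏ j ∈ Finset.range (b i), (Ni i - (j : ℤ))))
    ∧ ((∀ i j, i ≠ j → a i j ≤ 0) → (∀ i, 0 ≤ L i) →
        ((∑ w ∈ Finset.univ.filter
              (fun w : Equiv.Perm (Fin n) => ∀ k, ν (w⁻¹ k) = ν k),
            ∏ t : Fin n, Nfun a L w ν t) ≠ 0
          ↔ ∀ i < p, (b i : ℤ) ≤ Ni i)) := by
  obtain ⟨e, he⟩ := exists_sigmaFinEquiv_cumsum hc hcp
  have hνe (i : Fin p) (s : Fin (b i)) : ν (e ⟨i, s⟩) = nb i :=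
    hν i i.2 _ (by rw [he]; omega) (by rw [he, hc (i + 1), sum_range_succ, ← hc]; omega)
  have hnb : Function.Injective fun i : Fin p => nb i := fun i j h =>
    Fin.ext (by_contra fun hij => hdist i i.2 j j.2 hij h)
  have hsum := sum_stabilizer_prod_Nfun hc he a L ha hnb hνe hNi
  refine ⟨hsum, fun hneg hL => ?_⟩
  have hNi_nonneg (i : ℕ) (hi : i < p) : 0 ≤ Ni i := by
    rw [hNi, sub_nonneg]
    refine (sum_nonpos fun r hr => mul_nonpos_of_nonneg_of_nonpos (by positivity)
      (hneg _ _ (hdist i hi r (by grind) (by grind)))).trans (hL _)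
  simp only [hsum, prod_ne_zero_iff, mem_range]
  refine forall₂_congr fun i hi => ?_
  rw [mul_ne_zero_iff, prod_range_sub_ne_zero_iff (hNi_nonneg i hi)]
  simp [Nat.factorial_ne_zero]

/-- Theorem 5.2 of the paper (combinatorial form): for the block tuple `ν̃` built from
pairwise distinct `ν^1,…,ν^p` with block sizes `b_1,…,b_p`, and
`N_i = L(ν^i) − Σ_{r<i} b_r·a(ν^i, ν^r)`, one has
`Σ_{w ∈ S(ν̃,ν̃)} ∏_t N(w,ν̃,t) = ∏_i (b_i! · ∏_{j=0}^{b_i−1} (N_i − j))`;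
moreover, if `a(i,j) ≤ 0` for `i ≠ j` and `L ≥ 0`, this is nonzero iff `N_i ≥ b_i` for
all `i`. -/
theorem stmt13 {I : Type*} [DecidableEq I] (a : I → I → ℤ) (L : I → ℤ)
    (ha : ∀ i, a i i = 2)
    (n p : ℕ) (hp : 1 ≤ p)
    (b : ℕ → ℕ) (hbpos : ∀ i < p, 0 < b i)
    (c : ℕ → ℕ) (hc : ∀ i, c i = ∑ j ∈ Finset.range i, b j) (hcp : c p = n)
    (nb : ℕ → I) (hdist : ∀ i < p, ∀ j < p, i ≠ j → nb i ≠ nb j)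
    (ν : Fin n → I)
    (hν : ∀ i < p, ∀ k : Fin n, c i ≤ (k : ℕ) → (k : ℕ) < c (i + 1) → ν k = nb i)
    (Ni : ℕ → ℤ)
    (hNi : ∀ i, Ni i = L (nb i) - ∑ r ∈ Finset.range i, (b r : ℤ) * a (nb i) (nb r)) :
    (∑ w ∈ Finset.univ.filter (fun w : Equiv.Perm (Fin n) => ∀ k, ν (w⁻¹ k) = ν k),
        ∏ t : Fin n, Nfun a L w ν t
      = ∏ i ∈ Finset.range p,
          (((b i).factorial : ℤ) * ∏ j ∈ Finset.range (b i), (Ni i - (j : ℤ))))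
    ∧ ((∀ i j, i ≠ j → a i j ≤ 0) → (∀ i, 0 ≤ L i) →
        ((∑ w ∈ Finset.univ.filter
              (fun w : Equiv.Perm (Fin n) => ∀ k, ν (w⁻¹ k) = ν k),
            ∏ t : Fin n, Nfun a L w ν t) ≠ 0
          ↔ ∀ i < p, (b i : ℤ) ≤ Ni i)) :=
  stmt13_general a L ha n p b c hc hcp nb hdist ν hν Ni hNi
end

section
/- Assume a(i,i) = 2 for all i ∈ I, and define N^Λ(μ,k) := N(d_μ, μ, k) + #{1 ≤ j < k : μ_j = μ_k} for every tuple μ ∈ I^n with values in {ν^1,…,ν^p} (d_μ being its stable-sorting permutation). Let 1 ≤ a' < n be such that d_μ(a') > d_μ(a'+1) (equivalently, μ_{a'} = ν^r and μ_{a'+1} = ν^s with r > s), and let μ·s_{a'} denote the tuple obtained from μ by swapping its a'-th and (a'+1)-th entries. Then: N^Λ(μ,k) = N^Λ(μ·s_{a'}, k) for all k ∉ {a', a'+1}; N^Λ(μ, a') = N^Λ(μ·s_{a'}, a'+1) + a(μ_{a'}, μ_{a'+1}); and N^Λ(μ, a'+1) = N^Λ(μ·s_{a'}, a'). (Lemma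 5.13 of the paper.) -/
/-- `N^Λ(μ,k) = N(d,μ,k) + #{j < k : μ_j = μ_k}`, where
`N(d,μ,k) = L(μ_k) − Σ_{j ∈ J_d^{<k}} a(μ_k, μ_j)` and `J_d^{<k} = {j < k : d(j) < d(k)}`. -/
def NLam {I : Type*} [DecidableEq I] (a : I → I → ℤ) (L : I → ℤ) {n : ℕ}
    (d : Equiv.Perm (Fin n)) (μ : Fin n → I) (k : Fin n) : ℤ :=
  (L (μ k) - ∑ j ∈ Finset.univ.filter (fun j : Fin n => j < k ∧ d j < d k), a (μ k) (μ j))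
    + ((Finset.univ.filter (fun j : Fin n => j < k ∧ μ j = μ k)).card : ℤ)

open Finset in
lemma sortKey {I : Type*} [DecidableEq I] {n : ℕ} (p : ℕ) (nb : ℕ → I)
    (μ : Fin n → I) (b c : ℕ → ℕ)
    (hb : ∀ i, b i = (Finset.univ.filter (fun k : Fin n => μ k = nb i)).card)
    (hc : ∀ i, c i = ∑ j ∈ Finset.range i, b j)
    (e : Equiv.Perm (Fin n))
    (he1 : ∀ i < p, ∀ k : Fin n, μ k = nb i → c i ≤ (e k : ℕ) ∧ (e k : ℕ) < c (i + 1))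
    (he2 : ∀ k l : Fin n, k < l → μ k = μ l → e k < e l)
    (k : Fin n) (i : ℕ) (hi : i < p) (hik : μ k = nb i) :
    (e k : ℕ) = c i + (Finset.univ.filter (fun l : Fin n => l < k ∧ μ l = μ k)).card := by
  classical
  set F : Finset (Fin n) := Finset.univ.filter (fun l => μ l = nb i) with hF
  set S : Finset ℕ := F.image (fun l => (e l : ℕ)) with hS
  have hinj : ∀ x ∈ F, ∀ y ∈ F, (e x : ℕ) = (e y : ℕ) → x = y := by
    intro x _ y _ h
    exact e.injective (Fin.val_injective h)
  have hcardS : S.card = b i := by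
    rw [hS, Finset.card_image_of_injOn (fun x hx y hy h => hinj x hx y hy h), hb]
  have hsub : S ⊆ Finset.Ico (c i) (c (i+1)) := by
    intro x hx
    simp only [hS, Finset.mem_image] at hx
    obtain ⟨l, hl, rfl⟩ := hx
    simp only [hF, Finset.mem_filter] at hl
    have := he1 i hi l hl.2
    simp [Finset.mem_Ico, this.1, this.2]
  have hcsucc : c (i+1) = c i + b i := by
    rw [hc, hc, Finset.sum_range_succ]
  have hIcard : (Finset.Ico (c i) (c (i+1))).card = b i := by
    rw [Nat.card_Ico, hcsucc]; omega
  have hSeq : S = Finset.Ico (c i) (c (i+1)) :=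
    Finset.eq_of_subset_of_card_le hsub (by rw [hcardS, hIcard])
  have hekb : c i ≤ (e k : ℕ) ∧ (e k : ℕ) < c (i+1) := he1 i hi k hik
  have hkF : k ∈ F := by simp [hF, hik]
  have hcard : (Finset.univ.filter (fun l : Fin n => l < k ∧ μ l = μ k)).card
      = (S.filter (fun x => x < (e k : ℕ))).card := by
    apply Finset.card_bij (fun l _ => (e l : ℕ))
    · intro l hl
      simp only [Finset.mem_filter, Finset.mem_univ, true_and] at hl
      have hlF : l ∈ F := by simp [hF, hl.2, hik]
      refine Finset.mem_filter.2 ⟨Finset.mem_image.2 ⟨l, hlF, rfl⟩, ?_⟩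
      exact he2 l k hl.1 hl.2
    · intro x hx y hy h
      exact e.injective (Fin.val_injective h)
    · intro x hx
      simp only [Finset.mem_filter] at hx
      obtain ⟨l, hlF, rfl⟩ := Finset.mem_image.1 hx.1
      simp only [hF, Finset.mem_filter] at hlF
      have hlk : l < k := by
        rcases lt_trichotomy l k with h | h | h
        · exact h
        · exact absurd h.symm (by intro h'; subst h'; exact absurd hx.2 (lt_irrefl _))
        · exact absurd (he2 k l h (by rw [hik, hlF.2])) (by
            intro h'
            exact absurd hx.2 (not_lt.2 (le_of_lt h')))
      exact ⟨l, Finset.mem_filter.2 ⟨Finset.mem_univ _, hlk, by rw [hlF.2, hik]⟩, rfl⟩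
  have hfilt : S.filter (fun x => x < (e k : ℕ)) = Finset.Ico (c i) ((e k : ℕ)) := by
    rw [hSeq]; ext x
    simp only [Finset.mem_filter, Finset.mem_Ico]
    omega
  rw [hcard, hfilt, Nat.card_Ico]
  omega

/-- Lemma 5.13 of the paper: if `d_μ(a') > d_μ(a'+1)` (positions `k1, k2 = k1+1`), and
`μ' = μ·s_{a'}` is obtained by swapping the two entries (with stable-sorting permutations
`d = d_μ`, `d' = d_{μ'}` characterized by `hd1/hd2`, `hd1'/hd2'`), then
`N^Λ(μ,k) = N^Λ(μ',k)` for `k ∉ {k1,k2}`, `N^Λ(μ,k1) = N^Λ(μ',k2) + a(μ_{k1}, μ_{k2})`,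
and `N^Λ(μ,k2) = N^Λ(μ',k1)`. -/
theorem stmt14 {I : Type*} [DecidableEq I] (a : I → I → ℤ) (L : I → ℤ)
    (ha : ∀ i, a i i = 2)
    (n p : ℕ) (nb : ℕ → I)
    (hdist : ∀ i < p, ∀ j < p, i ≠ j → nb i ≠ nb j)
    (μ : Fin n → I) (hμ : ∀ k, ∃ i < p, μ k = nb i)
    (b : ℕ → ℕ) (hb : ∀ i, b i = (Finset.univ.filter (fun k : Fin n => μ k = nb i)).card)
    (c : ℕ → ℕ) (hc : ∀ i, c i = ∑ j ∈ Finset.range i, b j)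
    (d : Equiv.Perm (Fin n))
    (hd1 : ∀ i < p, ∀ k : Fin n, μ k = nb i → c i ≤ (d k : ℕ) ∧ (d k : ℕ) < c (i + 1))
    (hd2 : ∀ k l : Fin n, k < l → μ k = μ l → d k < d l)
    (k1 k2 : Fin n) (hk12 : (k1 : ℕ) + 1 = (k2 : ℕ))
    (hdesc : d k2 < d k1)
    (μ' : Fin n → I) (hμ' : μ' = μ ∘ (Equiv.swap k1 k2))
    (d' : Equiv.Perm (Fin n))
    (hd1' : ∀ i < p, ∀ k : Fin n, μ' k = nb i → c i ≤ (d' k : ℕ) ∧ (d' k : ℕ) < c (i + 1))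
    (hd2' : ∀ k l : Fin n, k < l → μ' k = μ' l → d' k < d' l) :
    (∀ k : Fin n, k ≠ k1 → k ≠ k2 → NLam a L d μ k = NLam a L d' μ' k)
    ∧ NLam a L d μ k1 = NLam a L d' μ' k2 + a (μ k1) (μ k2)
    ∧ NLam a L d μ k2 = NLam a L d' μ' k1 := by
  classical
  subst hμ'
  set σ := Equiv.swap k1 k2 with hσ
  have hklt : k1 < k2 := by rw [Fin.lt_def]; omega
  have hk1ne2 : k1 ≠ k2 := Fin.ne_of_lt hklt
  have hne : μ k1 ≠ μ k2 := fun h => absurd (hd2 k1 k2 hklt h) (lt_asymm hdesc)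
  have hσ1 : σ k1 = k2 := Equiv.swap_apply_left k1 k2
  have hσ2 : σ k2 = k1 := Equiv.swap_apply_right k1 k2
  have hσfix : ∀ j : Fin n, j ≠ k1 → j ≠ k2 → σ j = j :=
    fun j h1 h2 => Equiv.swap_apply_of_ne_of_ne h1 h2
  have hlt1 : ∀ j : Fin n, j < k1 → σ j = j :=
    fun j hj => hσfix j (Fin.ne_of_lt hj) (Fin.ne_of_lt (lt_trans hj hklt))
  have hlt2 : ∀ j : Fin n, j < k2 → j ≠ k1 → j < k1 := by
    intro j h h'
    have : (j : ℕ) ≠ (k1 : ℕ) := fun he => h' (Fin.ext he)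
    rw [Fin.lt_def] at *; omega
  -- the candidate sorting permutation for μ ∘ σ
  set f : Equiv.Perm (Fin n) := σ.trans d with hfdef
  have hfap : ∀ j : Fin n, f j = d (σ j) := fun j => rfl
  have hb' : ∀ i, b i = (Finset.univ.filter (fun k : Fin n => (μ ∘ σ) k = nb i)).card := by
    intro i
    rw [hb i]
    apply Finset.card_equiv σ
    intro j
    simp [Equiv.swap_apply_self, hσ]
  have hf1 : ∀ i < p, ∀ k : Fin n, (μ ∘ σ) k = nb i →
      c i ≤ (f k : ℕ) ∧ (f k : ℕ) < c (i + 1) := by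
    intro i hi k hk
    exact hd1 i hi (σ k) hk
  have hval : ∀ m : Fin n, ((σ m : Fin n) : ℕ)
      = if (m : ℕ) = (k1 : ℕ) then (k2 : ℕ) else if (m : ℕ) = (k2 : ℕ) then (k1 : ℕ) else (m : ℕ) := by
    intro m
    by_cases h1 : m = k1
    · rw [h1, hσ1, if_pos rfl]
    · by_cases h2 : m = k2
      · rw [h2, hσ2, if_neg (by omega), if_pos rfl]
      · rw [hσfix m h1 h2, if_neg (fun he => h1 (Fin.ext he)), if_neg (fun he => h2 (Fin.ext he))]
  have hf2 : ∀ k l : Fin n, k < l → (μ ∘ σ) k = (μ ∘ σ) l → f k < f l := by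
    intro k l hkl hμkl
    by_cases hab : k = k1 ∧ l = k2
    · exfalso
      apply hne
      have h' : μ (σ k) = μ (σ l) := hμkl
      rw [hab.1, hab.2, hσ1, hσ2] at h'
      exact h'.symm
    · refine hd2 _ _ ?_ hμkl
      rw [Fin.lt_def, hval k, hval l]
      have hv : ¬((k : ℕ) = (k1 : ℕ) ∧ (l : ℕ) = (k2 : ℕ)) := by
        rintro ⟨u, v⟩; exact hab ⟨Fin.ext u, Fin.ext v⟩
      rw [Fin.lt_def] at hkl
      split_ifs <;> omega
  -- uniqueness: d' = f
  have hd'f : d' = f := by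
    apply Equiv.ext
    intro k
    obtain ⟨i, hi, hik⟩ := hμ (σ k)
    have hik' : (μ ∘ σ) k = nb i := hik
    have h1 := sortKey p nb (μ ∘ σ) b c hb' hc d' hd1' hd2' k i hi hik'
    have h2 := sortKey p nb (μ ∘ σ) b c hb' hc f hf1 hf2 k i hi hik'
    exact Fin.val_injective (h1.trans h2.symm)
  subst hd'f
  refine ⟨?_, ?_, ?_⟩
  · -- k ∉ {k1, k2}
    intro k hkk1 hkk2
    have hfixk : σ k = k := hσfix k hkk1 hkk2
    have hmaps : ∀ j : Fin n, j < k ↔ σ j < k := by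
      intro j
      have hv1 : (k : ℕ) ≠ (k1 : ℕ) := fun he => hkk1 (Fin.ext he)
      have hv2 : (k : ℕ) ≠ (k2 : ℕ) := fun he => hkk2 (Fin.ext he)
      rcases eq_or_ne j k1 with rfl | h1
      · rw [hσ1, Fin.lt_def, Fin.lt_def]; omega
      · rcases eq_or_ne j k2 with rfl | h2
        · rw [hσ2, Fin.lt_def, Fin.lt_def]; omega
        · rw [hσfix j h1 h2]
    simp only [NLam, Function.comp_apply, hfap, hfixk]
    have hsum : ∑ j ∈ Finset.univ.filter (fun j : Fin n => j < k ∧ d j < d k), a (μ k) (μ j)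
        = ∑ j ∈ Finset.univ.filter (fun j : Fin n => j < k ∧ d (σ j) < d k), a (μ k) (μ (σ j)) := by
      apply Finset.sum_equiv σ
      · intro j
        simp only [Finset.mem_filter, Finset.mem_univ, true_and, Equiv.swap_apply_self, hσ]
        rw [← hσ, ← hmaps j]
      · intro j _
        rw [hσ, Equiv.swap_apply_self]
    have hcard : (Finset.univ.filter (fun j : Fin n => j < k ∧ μ j = μ k)).card
        = (Finset.univ.filter (fun j : Fin n => j < k ∧ μ (σ j) = μ k)).card := by
      apply Finset.card_equiv σ
      intro j
      simp only [Finset.mem_filter, Finset.mem_univ, true_and, Equiv.swap_apply_self, hσ]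
      rw [← hσ, ← hmaps j]
    rw [hsum, hcard]
  · -- k = k1
    simp only [NLam, Function.comp_apply, hfap, hσ2]
    have hT : Finset.univ.filter (fun j : Fin n => j < k2 ∧ d (σ j) < d k1)
        = insert k1 (Finset.univ.filter (fun j : Fin n => j < k1 ∧ d j < d k1)) := by
      ext j
      simp only [Finset.mem_insert, Finset.mem_filter, Finset.mem_univ, true_and]
      constructor
      · rintro ⟨h1, h2⟩
        rcases eq_or_ne j k1 with rfl | hne'
        · exact Or.inl rfl
        · refine Or.inr ⟨hlt2 j h1 hne', ?_⟩
          rwa [hlt1 j (hlt2 j h1 hne')] at h2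
      · rintro (rfl | ⟨h1, h2⟩)
        · exact ⟨hklt, by rw [hσ1]; exact hdesc⟩
        · exact ⟨lt_trans h1 hklt, by rw [hlt1 j h1]; exact h2⟩
    have hnotmem : k1 ∉ Finset.univ.filter (fun j : Fin n => j < k1 ∧ d j < d k1) := by
      simp
    rw [hT, Finset.sum_insert hnotmem, hσ1]
    have hsum : ∑ j ∈ Finset.univ.filter (fun j : Fin n => j < k1 ∧ d j < d k1), a (μ k1) (μ (σ j))
        = ∑ j ∈ Finset.univ.filter (fun j : Fin n => j < k1 ∧ d j < d k1), a (μ k1) (μ j) := by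
      apply Finset.sum_congr rfl
      intro j hj
      simp only [Finset.mem_filter] at hj
      rw [hlt1 j hj.2.1]
    have hcard : (Finset.univ.filter (fun j : Fin n => j < k2 ∧ μ (σ j) = μ k1)).card
        = (Finset.univ.filter (fun j : Fin n => j < k1 ∧ μ j = μ k1)).card := by
      congr 1
      apply Finset.filter_congr
      intro j _
      constructor
      · rintro ⟨h1, h2⟩
        rcases eq_or_ne j k1 with rfl | hne'
        · rw [hσ1] at h2; exact absurd h2.symm hne
        · have := hlt2 j h1 hne'
          exact ⟨this, by rwa [hlt1 j this] at h2⟩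
      · rintro ⟨h1, h2⟩
        exact ⟨lt_trans h1 hklt, by rwa [hlt1 j h1]⟩
    rw [hsum, hcard]
    ring
  · -- k = k2
    simp only [NLam, Function.comp_apply, hfap, hσ1]
    have hS : Finset.univ.filter (fun j : Fin n => j < k2 ∧ d j < d k2)
        = Finset.univ.filter (fun j : Fin n => j < k1 ∧ d j < d k2) := by
      apply Finset.filter_congr
      intro j _
      constructor
      · rintro ⟨h1, h2⟩
        rcases eq_or_ne j k1 with rfl | hne'
        · exact absurd (lt_trans h2 hdesc) (lt_irrefl _)
        · exact ⟨hlt2 j h1 hne', h2⟩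
      · rintro ⟨h1, h2⟩
        exact ⟨lt_trans h1 hklt, h2⟩
    have hS' : Finset.univ.filter (fun j : Fin n => j < k1 ∧ d (σ j) < d k2)
        = Finset.univ.filter (fun j : Fin n => j < k1 ∧ d j < d k2) := by
      apply Finset.filter_congr
      intro j _
      constructor
      · rintro ⟨h1, h2⟩
        exact ⟨h1, by rwa [hlt1 j h1] at h2⟩
      · rintro ⟨h1, h2⟩
        exact ⟨h1, by rwa [hlt1 j h1]⟩
    have hsum : ∑ j ∈ Finset.univ.filter (fun j : Fin n => j < k1 ∧ d j < d k2), a (μ k2) (μ (σ j))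
        = ∑ j ∈ Finset.univ.filter (fun j : Fin n => j < k1 ∧ d j < d k2), a (μ k2) (μ j) := by
      apply Finset.sum_congr rfl
      intro j hj
      simp only [Finset.mem_filter] at hj
      rw [hlt1 j hj.2.1]
    have hcard : (Finset.univ.filter (fun j : Fin n => j < k2 ∧ μ j = μ k2)).card
        = (Finset.univ.filter (fun j : Fin n => j < k1 ∧ μ (σ j) = μ k2)).card := by
      congr 1
      apply Finset.filter_congr
      intro j _
      constructor
      · rintro ⟨h1, h2⟩
        rcases eq_or_ne j k1 with rfl | hne'
        · exact absurd h2 hne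
        · have := hlt2 j h1 hne'
          exact ⟨this, by rwa [hlt1 j this]⟩
      · rintro ⟨h1, h2⟩
        exact ⟨lt_trans h1 hklt, by rwa [hlt1 j h1] at h2⟩
    rw [hS, hS', hsum, hcard]
end

section
/- Assume a(i,i) = 2 for all i ∈ I, a(i,j) ≤ 0 for all i ≠ j, and L(i) ≥ 0 for all i ∈ I. Let μ ∈ I^n with values in {ν^1,…,ν^p}, and define N^Λ(μ,k) := N(d_μ, μ, k) + #{1 ≤ j < k : μ_j = μ_k}. If N^Λ(μ,k) ≠ 0 for every 1 ≤ k ≤ n, then N^Λ(μ,k) > 0 for every 1 ≤ k ≤ n. (This is the combinatorial argument in the proof of Corollary 5.8 of the paper, characterizing when e(ν̃)R^Λ(β)e(μ) ≠ 0.) -/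
/-- The combinatorial argument in the proof of Corollary 5.8 of the paper: if `a(i,i) = 2`,
`a(i,j) ≤ 0` for `i ≠ j`, `L ≥ 0`, and `d = d_μ` is the stable-sorting permutation of `μ`
(characterized by `hd1`, `hd2`), then `N^Λ(μ,k) ≠ 0` for all `k` implies `N^Λ(μ,k) > 0`
for all `k`. -/
theorem stmt15 {I : Type*} [DecidableEq I] (a : I → I → ℤ) (L : I → ℤ)
    (ha : ∀ i, a i i = 2) (haneg : ∀ i j, i ≠ j → a i j ≤ 0) (hL : ∀ i, 0 ≤ L i)
    (n p : ℕ) (nb : ℕ → I)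
    (hdist : ∀ i < p, ∀ j < p, i ≠ j → nb i ≠ nb j)
    (μ : Fin n → I) (hμ : ∀ k, ∃ i < p, μ k = nb i)
    (b : ℕ → ℕ) (hb : ∀ i, b i = (Finset.univ.filter (fun k : Fin n => μ k = nb i)).card)
    (c : ℕ → ℕ) (hc : ∀ i, c i = ∑ j ∈ Finset.range i, b j)
    (d : Equiv.Perm (Fin n))
    (hd1 : ∀ i < p, ∀ k : Fin n, μ k = nb i → c i ≤ (d k : ℕ) ∧ (d k : ℕ) < c (i + 1))
    (hd2 : ∀ k l : Fin n, k < l → μ k = μ l → d k < d l)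
    (hne : ∀ k : Fin n, NLam a L d μ k ≠ 0) :
    ∀ k : Fin n, 0 < NLam a L d μ k := by
  suffices H : ∀ m : ℕ, ∀ k : Fin n, (k : ℕ) < m → 0 < NLam a L d μ k by
    intro k; exact H n k k.isLt
  intro m
  induction m with
  | zero => intro k hk; omega
  | succ m ihm =>
  intro k hk
  have ih : ∀ j : Fin n, j < k → 0 < NLam a L d μ j := fun j hj =>
    ihm j (by have h1 := Fin.lt_def.mp hj; omega)
  refine lt_of_le_of_ne ?_ (Ne.symm (hne k))
  by_cases h0 : (Finset.univ.filter (fun j : Fin n => j < k ∧ μ j = μ k)).Nonempty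
  · -- there is a previous occurrence; js is the last one
    set Sk := Finset.univ.filter (fun j : Fin n => j < k ∧ μ j = μ k) with hSk
    set js := Sk.max' h0 with hjsdef
    have hjsmem := Sk.max'_mem h0
    have hjs : js < k ∧ μ js = μ k := (Finset.mem_filter.mp hjsmem).2
    set Ak := Finset.univ.filter (fun j : Fin n => j < k ∧ d j < d k) with hAk
    set As := Finset.univ.filter (fun j : Fin n => j < js ∧ d j < d js) with hAs
    set Ss := Finset.univ.filter (fun j : Fin n => j < js ∧ μ j = μ js) with hSs
    have hsub : As ⊆ Ak := by
      intro j hj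
      rw [hAs, Finset.mem_filter] at hj
      rw [hAk, Finset.mem_filter]
      exact ⟨Finset.mem_univ j, hj.2.1.trans hjs.1, hj.2.2.trans (hd2 js k hjs.1 hjs.2)⟩
    have hjsAk : js ∈ Ak := by
      rw [hAk, Finset.mem_filter]
      exact ⟨Finset.mem_univ js, hjs.1, hd2 js k hjs.1 hjs.2⟩
    have hjsAs : js ∉ As := by
      rw [hAs, Finset.mem_filter]; intro h; exact absurd h.2.1 (lt_irrefl js)
    have hjsE : js ∈ Ak \ As := Finset.mem_sdiff.2 ⟨hjsAk, hjsAs⟩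
    -- Sk = insert js Ss
    have hSkeq : Sk = insert js Ss := by
      ext j
      rw [hSk, hSs, Finset.mem_insert, Finset.mem_filter, Finset.mem_filter]
      constructor
      · rintro ⟨-, hjk, hμj⟩
        by_cases hje : j = js
        · exact Or.inl hje
        · refine Or.inr ⟨Finset.mem_univ j, ?_, hμj.trans hjs.2.symm⟩
          have hle : j ≤ js := Sk.le_max' j (by
            rw [hSk, Finset.mem_filter]; exact ⟨Finset.mem_univ j, hjk, hμj⟩)
          exact lt_of_le_of_ne hle hje
      · rintro (hje | ⟨-, hjjs, hμj⟩)
        · rw [hje]; exact ⟨Finset.mem_univ js, hjs.1, hjs.2⟩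
        · exact ⟨Finset.mem_univ j, hjjs.trans hjs.1, hμj.trans hjs.2⟩
    have hjsSs : js ∉ Ss := by
      rw [hSs, Finset.mem_filter]; intro h; exact absurd h.2.1 (lt_irrefl js)
    have hcard : (Sk.card : ℤ) = (Ss.card : ℤ) + 1 := by
      rw [hSkeq, Finset.card_insert_of_notMem hjsSs]; push_cast; ring
    -- sum over extra part ≤ 2
    have hextra : ∑ j ∈ Ak \ As, a (μ k) (μ j) ≤ 2 := by
      rw [← Finset.insert_erase hjsE, Finset.sum_insert (Finset.notMem_erase _ _)]
      have h1 : a (μ k) (μ js) = 2 := by rw [hjs.2, ha]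
      have h2 : ∑ j ∈ (Ak \ As).erase js, a (μ k) (μ j) ≤ 0 := by
        apply Finset.sum_nonpos
        intro j hj
        have hjne : j ≠ js := Finset.ne_of_mem_erase hj
        have hjmem := Finset.mem_of_mem_erase hj
        rw [Finset.mem_sdiff, hAk, hAs, Finset.mem_filter, Finset.mem_filter] at hjmem
        obtain ⟨⟨-, hjk, -⟩, hnotAs⟩ := hjmem
        apply haneg
        intro hμeq
        -- if μ j = μ k then j ∈ Sk, so j < js, so j ∈ As, contradiction
        have hjSk : j ∈ Sk := by
          rw [hSk, Finset.mem_filter]; exact ⟨Finset.mem_univ j, hjk, hμeq.symm⟩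
        have hle : j ≤ js := Sk.le_max' j hjSk
        have hlt : j < js := lt_of_le_of_ne hle hjne
        exact hnotAs ⟨Finset.mem_univ j, hlt, hd2 j js hlt (hμeq.symm.trans hjs.2.symm)⟩
      linarith
    have hsplit : ∑ j ∈ Ak, a (μ k) (μ j)
        = ∑ j ∈ Ak \ As, a (μ k) (μ j) + ∑ j ∈ As, a (μ k) (μ j) :=
      (Finset.sum_sdiff hsub).symm
    have hih : 0 < NLam a L d μ js := ih js hjs.1
    have hNjs : NLam a L d μ js
        = L (μ k) - ∑ j ∈ As, a (μ k) (μ j) + (Ss.card : ℤ) := by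
      rw [NLam, hjs.2]
      have hS : Finset.univ.filter (fun j : Fin n => j < js ∧ μ j = μ k) = Ss := by
        rw [hSs]
        apply Finset.filter_congr
        intro j _
        rw [hjs.2]
      rw [hS]
    have hNk : NLam a L d μ k
        = L (μ k) - ∑ j ∈ Ak, a (μ k) (μ j) + (Sk.card : ℤ) := rfl
    rw [hNk, hcard, hsplit]
    have : 0 < L (μ k) - ∑ j ∈ As, a (μ k) (μ j) + (Ss.card : ℤ) := hNjs ▸ hih
    linarith
  · -- first occurrence: count is 0, all terms in the sum are ≤ 0
    rw [Finset.not_nonempty_iff_eq_empty] at h0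
    have hsum : ∑ j ∈ Finset.univ.filter (fun j : Fin n => j < k ∧ d j < d k),
        a (μ k) (μ j) ≤ 0 := by
      apply Finset.sum_nonpos
      intro j hj
      rw [Finset.mem_filter] at hj
      apply haneg
      intro hμeq
      have : j ∈ Finset.univ.filter (fun j : Fin n => j < k ∧ μ j = μ k) := by
        rw [Finset.mem_filter]; exact ⟨Finset.mem_univ j, hj.2.1, hμeq.symm⟩
      rw [h0] at this; exact absurd this (Finset.notMem_empty j)
    have := hL (μ k)
    have hc0 : ((Finset.univ.filter (fun j : Fin n => j < k ∧ μ j = μ k)).card : ℤ) = 0 := by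
      rw [h0]; simp
    rw [NLam, hc0]
    linarith
end
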